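/- arXiv:1511.05281 — 10 statements merged into one kernel-verified Lean document; each statement's English description precedes it below -/
import Mathlib

section
/- Let f : I ⊂ ℝ → ℝ be a twice differentiable function on the interior I° of the interval I, let a, b ∈ I° with a < b, and suppose f'' is (Lebesgue) integrable on [a, b]. Then (f(a) + f(b))/2 − (1/(b−a)) ∫_a^b f(x) dx = ((b−a)²/16) ∫_0^1 (1 − t²) [ f''( ((1+t)/2)·a + ((1−t)/2)·b ) + f''( ((1−t)/2)·a + ((1+t)/2)·b ) ] dt. -/
open MeasureTheory intervalIntegral

/-- Lemma 1: trapezoid identity for twice differentiable functions. -/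
theorem stmt_0 (I : Set ℝ) (hI : I.OrdConnected)
    (f f' f'' : ℝ → ℝ)
    (hf' : ∀ x ∈ interior I, HasDerivAt f (f' x) x)
    (hf'' : ∀ x ∈ interior I, HasDerivAt f' (f'' x) x)
    (a b : ℝ) (ha : a ∈ interior I) (hb : b ∈ interior I) (hab : a < b)
    (hint : IntervalIntegrable f'' volume a b) :
    (f a + f b) / 2 - (1 / (b - a)) * ∫ x in a..b, f x =
      (b - a) ^ 2 / 16 *
        ∫ t in (0:ℝ)..1, (1 - t ^ 2) *
          (f'' ((1 + t) / 2 * a + (1 - t) / 2 * b) +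
           f'' ((1 - t) / 2 * a + (1 + t) / 2 * b)) := by
  have hba : b - a ≠ 0 := sub_ne_zero.2 hab.ne'
  have hab2 : a - b ≠ 0 := sub_ne_zero.2 hab.ne
  have hh0 : (b - a) / 2 ≠ 0 := by positivity
  have hsub : Set.uIcc a b ⊆ interior I := (hI.interior).uIcc_subset ha hb
  have hf'u : ∀ x ∈ Set.uIcc a b, HasDerivAt f (f' x) x := fun x hx => hf' x (hsub hx)
  have hf''u : ∀ x ∈ Set.uIcc a b, HasDerivAt f' (f'' x) x := fun x hx => hf'' x (hsub hx)
  have hcf : ContinuousOn f (Set.uIcc a b) :=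
    fun x hx => (hf'u x hx).continuousAt.continuousWithinAt
  have hcf' : ContinuousOn f' (Set.uIcc a b) :=
    fun x hx => (hf''u x hx).continuousAt.continuousWithinAt
  have hfint : IntervalIntegrable f volume a b := hcf.intervalIntegrable
  have hf'int : IntervalIntegrable f' volume a b := hcf'.intervalIntegrable
  -- integration by parts, step 1
  have ibp1 : ∫ x in a..b, (x - a) * (b - x) * f'' x
      = - ∫ x in a..b, (a + b - 2 * x) * f' x := by
    have h := integral_mul_deriv_eq_deriv_mul
      (u := fun x => (x - a) * (b - x)) (u' := fun x => a + b - 2 * x)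
      (v := f') (v' := f'')
      (fun x _ => by
        have : HasDerivAt (fun x => (x - a) * (b - x)) (1 * (b - x) + (x - a) * (0 - 1)) x :=
          (((hasDerivAt_id x).sub_const a).mul ((hasDerivAt_const x b).sub (hasDerivAt_id x)))
        show HasDerivAt (fun x => (x - a) * (b - x)) (a + b - 2 * x) x
        convert this using 1; ring)
      hf''u
      ((Continuous.intervalIntegrable (by fun_prop) a b))
      hint
    rw [h]
    simp
  -- integration by parts, step 2
  have ibp2 : ∫ x in a..b, (a + b - 2 * x) * f' x
      = (a + b - 2 * b) * f b - (a + b - 2 * a) * f a - ∫ x in a..b, (-2 : ℝ) * f x := by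
    exact integral_mul_deriv_eq_deriv_mul
      (u := fun x => a + b - 2 * x) (u' := fun _ => (-2 : ℝ))
      (v := f) (v' := f')
      (fun x _ => by
        have : HasDerivAt (fun x => a + b - 2 * x) (0 - 2 * 1) x :=
          ((hasDerivAt_const x (a + b)).sub ((hasDerivAt_id x).const_mul 2))
        show HasDerivAt (fun x => a + b - 2 * x) (-2) x
        convert this using 1; ring)
      hf'u
      (intervalIntegrable_const)
      hf'int
  have key : ∫ x in a..b, (x - a) * (b - x) * f'' x
      = (b - a) * (f a + f b) - 2 * ∫ x in a..b, f x := by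
    rw [ibp1, ibp2, intervalIntegral.integral_const_mul]
    ring
  -- the kernel function
  set F : ℝ → ℝ := fun x => (x - a) * (b - x) * f'' x with hF
  have hFint : IntervalIntegrable F volume a b :=
    hint.continuousOn_mul (by fun_prop)
  have hm : (a + b) / 2 ∈ Set.uIcc a b := by
    rw [Set.uIcc_of_le hab.le]
    constructor <;> [linarith; linarith]
  have hFint1 : IntervalIntegrable F volume a ((a + b) / 2) :=
    hFint.mono_set (Set.uIcc_subset_uIcc Set.left_mem_uIcc hm)
  have hFint2 : IntervalIntegrable F volume ((a + b) / 2) b :=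
    hFint.mono_set (Set.uIcc_subset_uIcc hm Set.right_mem_uIcc)
  have hadd : (∫ x in a..(a + b) / 2, F x) + ∫ x in ((a + b) / 2)..b, F x
      = ∫ x in a..b, F x :=
    intervalIntegral.integral_add_adjacent_intervals hFint1 hFint2
  -- integrability of the composed functions on [0,1]
  have hcomp : ∀ c : ℝ, c ≠ 0 → IntervalIntegrable
      (fun t => F (c * t + (a + b) / 2)) volume ((a - (a+b)/2) / c) ((b - (a+b)/2) / c) := by
    intro c hc
    have h1 : IntervalIntegrable (fun x => F (x + (a + b) / 2)) volume
        (a - (a+b)/2) (b - (a+b)/2) := hFint.comp_add_right _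
    exact h1.comp_mul_left (c := c)
  have hG1 : IntervalIntegrable (fun t => F (-( (b-a)/2) * t + (a + b) / 2)) volume 0 1 := by
    have := hcomp (-((b-a)/2)) (by simpa using hh0)
    have e1 : (a - (a+b)/2) / (-((b-a)/2)) = 1 := by
      rw [div_eq_iff (neg_ne_zero.2 hh0)]; ring
    have e2 : (b - (a+b)/2) / (-((b-a)/2)) = -1 := by
      rw [div_eq_iff (neg_ne_zero.2 hh0)]; ring
    rw [e1, e2] at this
    exact this.mono_set (Set.uIcc_subset_uIcc (by norm_num [Set.mem_uIcc])
      (by norm_num [Set.mem_uIcc]))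
  have hG2 : IntervalIntegrable (fun t => F ((b-a)/2 * t + (a + b) / 2)) volume 0 1 := by
    have := hcomp ((b-a)/2) hh0
    have e1 : (a - (a+b)/2) / ((b-a)/2) = -1 := by rw [div_eq_iff hh0]; ring
    have e2 : (b - (a+b)/2) / ((b-a)/2) = 1 := by rw [div_eq_iff hh0]; ring
    rw [e1, e2] at this
    exact this.mono_set (Set.uIcc_subset_uIcc (by norm_num [Set.mem_uIcc])
      (by norm_num [Set.mem_uIcc]))
  -- pointwise identity for the integrand
  have hpt : ∀ t : ℝ, (1 - t ^ 2) *
      (f'' ((1 + t) / 2 * a + (1 - t) / 2 * b) + f'' ((1 - t) / 2 * a + (1 + t) / 2 * b))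
      = (((b-a)/2) ^ 2)⁻¹ *
        (F (-((b-a)/2) * t + (a + b) / 2) + F ((b-a)/2 * t + (a + b) / 2)) := by
    intro t
    have e1 : (1 + t) / 2 * a + (1 - t) / 2 * b = -((b-a)/2) * t + (a + b) / 2 := by ring
    have e2 : (1 - t) / 2 * a + (1 + t) / 2 * b = (b-a)/2 * t + (a + b) / 2 := by ring
    rw [e1, e2, hF]
    simp only
    field_simp
    ring
  -- change of variables
  have i1 : ∫ t in (0:ℝ)..1, F (-((b-a)/2) * t + (a + b) / 2)
      = ((b-a)/2)⁻¹ * ∫ x in a..(a + b) / 2, F x := by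
    rw [intervalIntegral.integral_comp_mul_add F (by simpa using hh0 : -((b-a)/2) ≠ 0)
      ((a + b) / 2)]
    rw [show -((b-a)/2) * 0 + (a + b) / 2 = (a + b) / 2 by ring,
        show -((b-a)/2) * 1 + (a + b) / 2 = a by ring,
        intervalIntegral.integral_symm a ((a + b) / 2), smul_eq_mul]
    field_simp
  have i2 : ∫ t in (0:ℝ)..1, F ((b-a)/2 * t + (a + b) / 2)
      = ((b-a)/2)⁻¹ * ∫ x in ((a + b) / 2)..b, F x := by
    rw [intervalIntegral.integral_comp_mul_add F hh0 ((a + b) / 2)]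
    rw [show (b-a)/2 * 0 + (a + b) / 2 = (a + b) / 2 by ring,
        show (b-a)/2 * 1 + (a + b) / 2 = b by ring, smul_eq_mul]
  have hR : ∫ t in (0:ℝ)..1, (1 - t ^ 2) *
      (f'' ((1 + t) / 2 * a + (1 - t) / 2 * b) + f'' ((1 - t) / 2 * a + (1 + t) / 2 * b))
      = (((b-a)/2) ^ 2)⁻¹ * (((b-a)/2)⁻¹ * ((∫ x in a..(a + b) / 2, F x)
          + ∫ x in ((a + b) / 2)..b, F x)) := by
    simp only [hpt]
    rw [intervalIntegral.integral_const_mul, intervalIntegral.integral_add hG1 hG2, i1, i2]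
    ring
  rw [hR, hadd, key]
  field_simp [hab2]
  ring
end

section
/- Let h : [0,1] → ℝ be a nonnegative function not identically zero with h(1/2) > 0, and let f : I ⊂ [0,∞) → ℝ be a twice differentiable function on the interior I° of I, with a, b ∈ I°, a < b, and f'' integrable on [a, b]. Let q > 1 and p = q/(q−1). If |f''|^q is h-concave on [a, b], then |(f(a) + f(b))/2 − (1/(b−a)) ∫_a^b f(x) dx| ≤ ((b−a)²/32) · B(1/2, p+1)^{1/p} · (1/h(1/2))^{1/q} · [ |f''((a+3b)/4)| + |f''((3a+b)/4)| ]. -/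
open MeasureTheory intervalIntegral

private lemma aux_young_opt {p q : ℝ} (hpq : Real.HolderConjugate p q)
    {α β : ℝ} (hαβ : α ≤ β) {w g : ℝ → ℝ}
    (hw0 : ∀ x ∈ Set.Icc α β, 0 ≤ w x) (hg0 : ∀ x ∈ Set.Icc α β, 0 ≤ g x)
    (hwg : IntervalIntegrable (fun x => w x * g x) volume α β)
    (hwp : IntervalIntegrable (fun x => w x ^ p) volume α β)
    (hgq : IntervalIntegrable (fun x => g x ^ q) volume α β)
    {X Y : ℝ} (hX0 : 0 < X) (hY0 : 0 < Y)
    (hX : (∫ x in α..β, w x ^ p) ≤ X) (hY : (∫ x in α..β, g x ^ q) ≤ Y) :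
    (∫ x in α..β, w x * g x) ≤ X ^ (1/p) * Y ^ (1/q) := by
  have hp1 := hpq.lt
  have hq1 := hpq.symm.lt
  have hp0 : (0:ℝ) < p := by linarith
  have hq0 : (0:ℝ) < q := by linarith
  have hinv : 1/p + 1/q = 1 := by
    have := hpq.inv_add_inv_eq_one
    simpa [one_div] using this
  have hsum : p + q = p * q := by
    field_simp at hinv; linarith
  have hpq0 : (0:ℝ) < p + q := by linarith
  have hXY0 : (0:ℝ) < X / Y := div_pos hX0 hY0
  set l : ℝ := (X / Y) ^ (1 / (p + q)) with hl
  have hl0 : 0 < l := Real.rpow_pos_of_pos hXY0 _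
  set Z : ℝ := X ^ (1/p) * Y ^ (1/q) with hZ
  have e2 : l⁻¹ ^ p * X = Z := by
    have h2 : l⁻¹ ^ p = (X / Y) ^ (-(1/q)) := by
      rw [hl, ← Real.rpow_neg hXY0.le, ← Real.rpow_mul hXY0.le]
      congr 1
      field_simp
      linarith [hsum]
    have h3 : (X/Y) ^ (-(1/q)) = X ^ (-(1/q)) * Y ^ (1/q) := by
      rw [Real.div_rpow hX0.le hY0.le, div_eq_mul_inv, Real.rpow_neg hY0.le, inv_inv]
    have h4 : X ^ (-(1/q)) * X = X ^ (1/p) := by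
      nth_rewrite 2 [← Real.rpow_one X]
      rw [← Real.rpow_add hX0]
      congr 1; linarith
    calc l⁻¹ ^ p * X = (X ^ (-(1/q)) * X) * Y ^ (1/q) := by rw [h2, h3]; ring
      _ = Z := by rw [h4]
  have e3 : l ^ q * Y = Z := by
    have h2 : l ^ q = (X / Y) ^ (1/p) := by
      rw [hl, ← Real.rpow_mul hXY0.le]
      congr 1
      field_simp
      linarith [hsum]
    have h3 : (X/Y) ^ ((1:ℝ)/p) = X ^ (1/p) * Y ^ (-(1/p)) := by
      rw [Real.div_rpow hX0.le hY0.le, div_eq_mul_inv, ← Real.rpow_neg hY0.le]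
    have h4 : Y ^ (-(1/p)) * Y = Y ^ (1/q) := by
      nth_rewrite 2 [← Real.rpow_one Y]
      rw [← Real.rpow_add hY0]
      congr 1; linarith
    calc l ^ q * Y = X ^ (1/p) * (Y ^ (-(1/p)) * Y) := by rw [h2, h3]; ring
      _ = Z := by rw [h4]
  -- pointwise Young inequality
  have key : ∀ x ∈ Set.Icc α β, w x * g x ≤ (l⁻¹ ^ p / p) * w x ^ p + (l ^ q / q) * g x ^ q := by
    intro x hx
    have hwx := hw0 x hx
    have hgx := hg0 x hx
    have h1 : w x * g x = (w x * l⁻¹) * (l * g x) := by field_simp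
    have h2 := Real.young_inequality (w x * l⁻¹) (l * g x) hpq
    rw [abs_of_nonneg (by positivity), abs_of_nonneg (by positivity)] at h2
    rw [Real.mul_rpow hwx (by positivity), Real.mul_rpow hl0.le hgx] at h2
    rw [h1]
    calc (w x * l⁻¹) * (l * g x) ≤ w x ^ p * l⁻¹ ^ p / p + l ^ q * g x ^ q / q := h2
      _ = (l⁻¹ ^ p / p) * w x ^ p + (l ^ q / q) * g x ^ q := by ring
  have hint2 : IntervalIntegrable
      (fun x => (l⁻¹ ^ p / p) * w x ^ p + (l ^ q / q) * g x ^ q) volume α β :=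
    (hwp.const_mul _).add (hgq.const_mul _)
  have step := intervalIntegral.integral_mono_on hαβ hwg hint2 key
  rw [intervalIntegral.integral_add (hwp.const_mul _) (hgq.const_mul _),
    intervalIntegral.integral_const_mul, intervalIntegral.integral_const_mul] at step
  have c1 : 0 ≤ l⁻¹ ^ p / p := by positivity
  have c2 : 0 ≤ l ^ q / q := by positivity
  calc (∫ x in α..β, w x * g x)
      ≤ (l⁻¹ ^ p / p) * (∫ x in α..β, w x ^ p) + (l ^ q / q) * (∫ x in α..β, g x ^ q) := step
    _ ≤ (l⁻¹ ^ p / p) * X + (l ^ q / q) * Y := by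
        gcongr
    _ = (l⁻¹ ^ p * X) * (1/p) + (l ^ q * Y) * (1/q) := by ring
    _ = Z * (1/p + 1/q) := by rw [e2, e3]; ring
    _ = Z := by rw [hinv, mul_one]

private lemma aux_reflect {α β C : ℝ} (hαβ : α ≤ β) {g : ℝ → ℝ}
    (hgint : IntervalIntegrable g volume α β)
    (hrefl : ∀ x ∈ Set.Icc α β, g x + g (α + β - x) ≤ C) :
    (∫ x in α..β, g x) ≤ (β - α) * C / 2 := by
  have hrint : IntervalIntegrable (fun x => g (α + β - x)) volume α β := by
    have := hgint.comp_sub_left (α + β)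
    have h1 : α + β - α = β := by ring
    have h2 : α + β - β = α := by ring
    rw [h1, h2] at this
    exact this.symm
  have hid : (∫ x in α..β, g (α + β - x)) = ∫ x in α..β, g x := by
    rw [intervalIntegral.integral_comp_sub_left g (α + β)]
    congr 1 <;> ring
  have hsum : (∫ x in α..β, (g x + g (α + β - x))) ≤ (β - α) * C := by
    have h1 : (∫ x in α..β, (g x + g (α + β - x))) ≤ ∫ _x in α..β, C :=
      intervalIntegral.integral_mono_on hαβ (hgint.add hrint)
        (intervalIntegrable_const) hrefl
    simpa using h1
  rw [intervalIntegral.integral_add hgint hrint, hid] at hsum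
  linarith

private lemma aux_F_nonneg {p t : ℝ} (hp : 0 < p) (ht : t ∈ Set.Icc (0:ℝ) 1) :
    0 ≤ t ^ ((1:ℝ)/2 - 1) * (1 - t) ^ (p + 1 - 1) :=
  mul_nonneg (Real.rpow_nonneg ht.1 _) (Real.rpow_nonneg (by linarith [ht.2]) _)

private lemma aux_F_integrable {p : ℝ} (hp : 0 < p) :
    IntervalIntegrable (fun t : ℝ => t ^ ((1:ℝ)/2 - 1) * (1 - t) ^ (p + 1 - 1)) volume 0 1 := by
  have hbase : IntervalIntegrable (fun t : ℝ => t ^ ((1:ℝ)/2 - 1)) volume (0:ℝ) 1 :=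
    intervalIntegrable_rpow' (by norm_num)
  have hcont2 : Continuous (fun t : ℝ => (1 - t) ^ (p + 1 - 1)) := by
    rw [continuous_iff_continuousAt]
    intro x
    exact (Real.continuousAt_rpow_const (1 - x) _ (Or.inr (by linarith))).comp
      ((continuous_const.sub continuous_id).continuousAt)
  apply hbase.mono_fun
  · exact (hbase.1.aestronglyMeasurable.mono_measure
      (by rw [Set.uIoc_of_le (by norm_num : (0:ℝ) ≤ 1)])).mul
      hcont2.aestronglyMeasurable.restrict
  · rw [Filter.EventuallyLE, ae_restrict_iff' measurableSet_uIoc]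
    refine Filter.Eventually.of_forall (fun x hx => ?_)
    rw [Set.uIoc_of_le (by norm_num : (0:ℝ) ≤ 1)] at hx
    have hx0 : 0 < x := hx.1
    have hx1 : x ≤ 1 := hx.2
    have h1 : ‖x ^ ((1:ℝ)/2 - 1) * (1 - x) ^ (p + 1 - 1)‖
        = x ^ ((1:ℝ)/2 - 1) * (1 - x) ^ (p + 1 - 1) := by
      rw [Real.norm_eq_abs, abs_of_nonneg]
      exact mul_nonneg (Real.rpow_nonneg hx0.le _) (Real.rpow_nonneg (by linarith) _)
    rw [h1, Real.norm_eq_abs, abs_of_nonneg (Real.rpow_nonneg hx0.le _)]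
    have h2 : (1 - x) ^ (p + 1 - 1) ≤ 1 :=
      Real.rpow_le_one (by linarith) (by linarith) (by linarith)
    nlinarith [Real.rpow_nonneg hx0.le ((1:ℝ)/2 - 1), Real.rpow_nonneg (show (0:ℝ) ≤ 1 - x by linarith) (p + 1 - 1)]

private lemma aux_xbound {a b p : ℝ} (hab : a < b) (hp : 1 < p) :
    (∫ x in ((a+b)/2)..b, ((x - a) * (b - x)) ^ p) ≤
      (b - a) ^ (2*p+1) * (∫ t in (0:ℝ)..1, t ^ ((1:ℝ)/2 - 1) * (1 - t) ^ (p + 1 - 1))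
        / 4 ^ (p+1) := by
  have hba : (0:ℝ) < b - a := by linarith
  have hp0 : (0:ℝ) < p := by linarith
  set m : ℝ := (a+b)/2 with hm
  have hmb : m < b := by rw [hm]; linarith
  have ham : a < m := by rw [hm]; linarith
  set F : ℝ → ℝ := fun t => t ^ ((1:ℝ)/2 - 1) * (1 - t) ^ (p + 1 - 1) with hF
  set B : ℝ := ∫ t in (0:ℝ)..1, F t with hBdef
  have hFint : IntervalIntegrable F volume 0 1 := aux_F_integrable hp0
  set W : ℝ → ℝ := fun x => ((x - a) * (b - x)) ^ p with hW
  have hWcont : Continuous W := by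
    rw [hW, continuous_iff_continuousAt]
    intro x
    exact (Real.continuousAt_rpow_const _ _ (Or.inr hp0.le)).comp
      (((continuous_id.sub continuous_const).mul (continuous_const.sub continuous_id)).continuousAt)
  set M : ℝ := ((b-a)^(2:ℕ)) ^ p with hM
  have hM0 : 0 ≤ M := Real.rpow_nonneg (by positivity) _
  set R : ℝ := (b - a) ^ (2*p+1) * B / 4 ^ (p+1) with hR
  have key : ∀ ε : ℝ, 0 < ε → ε < (b-a)/2 → (∫ x in m..b, W x) ≤ R + ε * M := by
    intro ε hε hε2
    have hmε : m + ε < b := by rw [hm] at *; linarith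
    have hmε0 : m < m + ε := by linarith
    set φ : ℝ → ℝ := fun x => ((2*x - a - b)/(b - a))^(2:ℕ) with hφ
    set φD : ℝ → ℝ := fun x => 4*(2*x - a - b)/(b - a)^(2:ℕ) with hφD
    have hφb : φ b = 1 := by
      rw [hφ]
      simp only []
      rw [show 2*b - a - b = b - a by ring, div_self hba.ne', one_pow]
    have hφderiv : ∀ x : ℝ, HasDerivAt φ (φD x) x := by
      intro x
      have h1 : HasDerivAt (fun x : ℝ => (2*x - a - b)/(b - a)) (2/(b-a)) x := by
        have h2 : HasDerivAt (fun x : ℝ => 2*x - a - b) 2 x := by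
          simpa using (((hasDerivAt_id x).const_mul (2:ℝ)).sub_const a).sub_const b
        simpa using h2.div_const (b - a)
      have h3 := h1.pow 2
      refine h3.congr_deriv ?_
      rw [hφD]
      simp only [Nat.cast_ofNat, pow_one, Nat.reduceSub]
      field_simp
      ring
    have himg : φ '' Set.uIcc (m+ε) b ⊆ Set.Ioi (0:ℝ) := by
      rintro u ⟨x, hx, rfl⟩
      rw [Set.uIcc_of_le hmε.le] at hx
      have h1 : 0 < 2*x - a - b := by
        have h2 := hx.1
        simp only [hm] at h2 ⊢
        linarith
      have h5 : 0 < (2*x - a - b)/(b - a) := div_pos h1 hba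
      exact pow_pos h5 2
    have hFcont : ContinuousOn F (φ '' Set.uIcc (m+ε) b) := by
      intro u hu
      have hu0 : 0 < u := himg hu
      apply ContinuousAt.continuousWithinAt
      rw [hF]
      exact (Real.continuousAt_rpow_const u _ (Or.inl hu0.ne')).mul
        ((Real.continuousAt_rpow_const (1 - u) _ (Or.inr (by linarith))).comp
          ((continuous_const.sub continuous_id).continuousAt))
    have hsubst : (∫ x in (m+ε)..b, φD x • F (φ x)) = ∫ u in (φ (m+ε))..(φ b), F u := by
      apply intervalIntegral.integral_comp_smul_deriv'' (f := φ) (f' := φD) (g := F)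
      · exact (Continuous.continuousOn (by rw [hφ]; fun_prop))
      · intro x _
        exact (hφderiv x).hasDerivWithinAt
      · exact (Continuous.continuousOn (by rw [hφD]; fun_prop))
      · exact hFcont
    have hptwise : ∀ x ∈ Set.uIcc (m+ε) b,
        φD x • F (φ x) = (4 ^ (p+1) / (b-a) ^ (2*p+1)) * (((x - a) * (b - x)) ^ p) := by
      intro x hx
      rw [Set.uIcc_of_le hmε.le] at hx
      obtain ⟨hx1, hx2⟩ := hx
      set s : ℝ := (2*x - a - b)/(b - a) with hs
      have hs0 : 0 < s := by
        apply div_pos _ hba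
        simp only [hm] at hx1
        linarith
      have hs1 : s ≤ 1 := by
        rw [hs, div_le_one hba]; linarith
      have hxa : (0:ℝ) ≤ x - a := by simp only [hm] at hx1; linarith
      have hbx : (0:ℝ) ≤ b - x := by linarith
      have e1 : (s^(2:ℕ) : ℝ) ^ ((1:ℝ)/2 - 1) = s⁻¹ := by
        rw [← Real.rpow_natCast s 2, ← Real.rpow_mul hs0.le]
        norm_num
        rw [show ((-1:ℝ)) = -(1:ℝ) by norm_num, Real.rpow_neg hs0.le, Real.rpow_one]
      have e2 : 1 - s^(2:ℕ) = 4*((x - a)*(b - x))/(b-a)^(2:ℕ) := by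
        rw [hs]; field_simp; ring
      have e3 : (1 - s^(2:ℕ)) ^ (p + 1 - 1) = 4^p * (((x - a) * (b - x)) ^ p) / (b-a)^(2*p) := by
        rw [e2, Real.div_rpow (by positivity) (by positivity),
          Real.mul_rpow (by norm_num) (by positivity),
          ← Real.rpow_natCast (b-a) 2, ← Real.rpow_mul hba.le]
        norm_num
      have hφx : φ x = s^(2:ℕ) := by rw [hφ, hs]
      have hφDx : φD x = 4*s/(b-a) := by
        rw [hφD, hs]
        simp only []
        rw [mul_div_assoc, mul_div_assoc, div_div, ← sq]
      have h6 : φD x • F (φ x)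
          = (4*s/(b-a)) * ((s^(2:ℕ) : ℝ) ^ ((1:ℝ)/2 - 1) * (1 - s^(2:ℕ)) ^ (p + 1 - 1)) := by
        simp only [hφDx, hφx, hF, smul_eq_mul]
      rw [h6, e1, e3,
        show (4:ℝ)^(p+1) = 4^p * 4 by rw [Real.rpow_add (by norm_num), Real.rpow_one],
        show (b-a)^(2*p+1) = (b-a)^(2*p) * (b-a) by rw [Real.rpow_add hba, Real.rpow_one]]
      field_simp
    have hconst : (4 ^ (p+1) / (b-a) ^ (2*p+1)) * (∫ x in (m+ε)..b, ((x - a) * (b - x)) ^ p)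
        = ∫ u in (φ (m+ε))..1, F u := by
      have h2 := intervalIntegral.integral_congr (μ := volume) hptwise
      rw [intervalIntegral.integral_const_mul] at h2
      rw [← h2, hsubst, hφb]
    have hδ : φ (m+ε) ∈ Set.Icc (0:ℝ) 1 := by
      constructor
      · rw [hφ]; positivity
      · rw [hφ]
        simp only []
        apply pow_le_one₀
        · apply div_nonneg _ hba.le
          simp only [hm]; linarith
        · rw [div_le_one hba]
          simp only [hm]; linarith
    have hle : (∫ u in (φ (m+ε))..1, F u) ≤ B := by
      have hsplit : (∫ u in (0:ℝ)..(φ (m+ε)), F u) + (∫ u in (φ (m+ε))..1, F u) = B := by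
        rw [hBdef]
        apply intervalIntegral.integral_add_adjacent_intervals
        · exact hFint.mono_set (Set.uIcc_subset_uIcc (by simp)
            (by rw [Set.uIcc_of_le (by norm_num : (0:ℝ) ≤ 1)]; exact hδ))
        · exact hFint.mono_set (Set.uIcc_subset_uIcc
            (by rw [Set.uIcc_of_le (by norm_num : (0:ℝ) ≤ 1)]; exact hδ) (by simp))
      have hpos : 0 ≤ ∫ u in (0:ℝ)..(φ (m+ε)), F u := by
        apply intervalIntegral.integral_nonneg hδ.1
        intro u hu
        rw [hF]
        exact aux_F_nonneg hp0 ⟨hu.1, le_trans hu.2 hδ.2⟩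
      linarith
    have hc0 : (0:ℝ) < 4 ^ (p+1) / (b-a) ^ (2*p+1) :=
      div_pos (Real.rpow_pos_of_pos (by norm_num) _) (Real.rpow_pos_of_pos hba _)
    have htail : (∫ x in (m+ε)..b, W x) ≤ R := by
      have h1 : (4 ^ (p+1) / (b-a) ^ (2*p+1)) * (∫ x in (m+ε)..b, W x) ≤ B := by
        rw [hW]
        rw [hconst]
        exact hle
      have h2 : (∫ x in (m+ε)..b, W x) ≤ B / (4^(p+1)/(b-a)^(2*p+1)) :=
        (le_div_iff₀' hc0).mpr h1
      calc (∫ x in (m+ε)..b, W x) ≤ B / (4^(p+1)/(b-a)^(2*p+1)) := h2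
        _ = R := by rw [hR, div_div_eq_mul_div]; ring
    have hhead : (∫ x in m..(m+ε), W x) ≤ ε * M := by
      have h1 : (∫ x in m..(m+ε), W x) ≤ ∫ _x in m..(m+ε), M := by
        apply intervalIntegral.integral_mono_on hmε0.le
          (hWcont.intervalIntegrable _ _) intervalIntegrable_const
        intro x hx
        obtain ⟨hx1, hx2⟩ := hx
        rw [hW, hM]
        apply Real.rpow_le_rpow
        · have h7 : a ≤ x := by simp only [hm] at hx1; linarith
          have h8 : x ≤ b := by simp only [hm] at hx1 hx2; linarith
          nlinarith
        · have h7 : a ≤ x := by simp only [hm] at hx1; linarith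
          have h8 : x ≤ b := by simp only [hm] at hx1 hx2; linarith
          nlinarith
        · exact hp0.le
      rw [intervalIntegral.integral_const, smul_eq_mul,
        show m + ε - m = ε by ring] at h1
      exact h1
    have hadd : (∫ x in m..(m+ε), W x) + (∫ x in (m+ε)..b, W x) = ∫ x in m..b, W x :=
      intervalIntegral.integral_add_adjacent_intervals
        (hWcont.intervalIntegrable _ _) (hWcont.intervalIntegrable _ _)
    linarith
  apply le_of_forall_pos_le_add
  intro δ hδ
  set ε : ℝ := min (δ/(M+1)) ((b-a)/4) with hε
  have hε0 : 0 < ε := lt_min (by positivity) (by linarith)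
  have hε2 : ε < (b-a)/2 := lt_of_le_of_lt (min_le_right _ _) (by linarith)
  have h1 := key ε hε0 hε2
  have h2 : ε * M ≤ δ := by
    have h3 : ε ≤ δ/(M+1) := min_le_left _ _
    have h4 : ε * M ≤ (δ/(M+1)) * M := mul_le_mul_of_nonneg_right h3 hM0
    have h5 : (δ/(M+1)) * M ≤ δ := by
      rw [div_mul_eq_mul_div, div_le_iff₀ (by linarith)]
      nlinarith
    linarith
  linarith

private lemma aux_arith {p q Bv hv A c : ℝ} (hpq : Real.HolderConjugate p q)
    (hc : 0 < c) (hB : 0 < Bv) (hh : 0 < hv) (hA : 0 < A) :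
    (c ^ (2*p+1) * Bv / 4 ^ (p+1)) ^ (1/p) * (c * A ^ q / (4 * hv)) ^ (1/q)
      = c ^ (3:ℕ) * Bv ^ (1/p) * (1/hv) ^ (1/q) * A / 16 := by
  have hp1 := hpq.lt
  have hq1 := hpq.symm.lt
  have hp0 : (0:ℝ) < p := by linarith
  have hq0 : (0:ℝ) < q := by linarith
  have hinv : 1/p + 1/q = 1 := by
    have := hpq.inv_add_inv_eq_one
    simpa [one_div] using this
  have h1 : (c ^ (2*p+1) * Bv / 4 ^ (p+1)) ^ (1/p)
      = c^((2*p+1)*(1/p)) * Bv^(1/p) / 4^((p+1)*(1/p)) := by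
    rw [Real.div_rpow (by positivity) (by positivity),
      Real.mul_rpow (by positivity) hB.le,
      ← Real.rpow_mul hc.le, ← Real.rpow_mul (by norm_num : (0:ℝ) ≤ 4)]
  have h2 : (c * A ^ q / (4 * hv)) ^ (1/q) = c^(1/q) * A / (4^(1/q) * hv^(1/q)) := by
    rw [Real.div_rpow (by positivity) (by positivity),
      Real.mul_rpow hc.le (by positivity),
      Real.mul_rpow (by norm_num : (0:ℝ) ≤ 4) hh.le,
      ← Real.rpow_mul hA.le, mul_one_div_cancel hq0.ne', Real.rpow_one]
  have e1 : (2*p+1)*(1/p) + 1/q = 3 := by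
    have h3 : (2*p+1)*(1/p) = 2 + 1/p := by field_simp
    rw [h3]; linarith
  have e2 : (p+1)*(1/p) + 1/q = 2 := by
    have h3 : (p+1)*(1/p) = 1 + 1/p := by field_simp
    rw [h3]; linarith
  have hc3 : c^((2*p+1)*(1/p)) * c^(1/q) = c^(3:ℕ) := by
    rw [← Real.rpow_add hc, e1, show (3:ℝ) = ((3:ℕ):ℝ) by norm_num, Real.rpow_natCast]
  have h44 : (4:ℝ)^((p+1)*(1/p)) * 4^(1/q) = 16 := by
    rw [← Real.rpow_add (by norm_num : (0:ℝ) < 4), e2,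
      show (2:ℝ) = ((2:ℕ):ℝ) by norm_num, Real.rpow_natCast]
    norm_num
  have hinvq : ((1:ℝ)/hv) ^ ((1:ℝ)/q) = 1/hv^(1/q) := by
    rw [Real.div_rpow (by norm_num) hh.le, Real.one_rpow]
  calc (c ^ (2*p+1) * Bv / 4 ^ (p+1)) ^ (1/p) * (c * A ^ q / (4 * hv)) ^ (1/q)
      = (c^((2*p+1)*(1/p)) * Bv^(1/p) / 4^((p+1)*(1/p))) * (c^(1/q) * A / (4^(1/q) * hv^(1/q))) := by
        rw [h1, h2]
    _ = ((c^((2*p+1)*(1/p)) * c^(1/q)) * Bv^(1/p) * A) / ((4^((p+1)*(1/p)) * 4^(1/q)) * hv^(1/q)) := by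
        ring
    _ = (c^(3:ℕ) * Bv^(1/p) * A) / (16 * hv^(1/q)) := by rw [hc3, h44]
    _ = c ^ (3:ℕ) * Bv ^ (1/p) * (1/hv) ^ (1/q) * A / 16 := by rw [hinvq]; ring

set_option maxHeartbeats 2000000 in
/-- Theorem 9: trapezoid inequality when `|f''|^q` is h-concave on `[a, b]`, `q > 1`. -/
theorem stmt_4 (I : Set ℝ) (hI : I.OrdConnected) (hI0 : I ⊆ Set.Ici (0:ℝ))
    (h : ℝ → ℝ) (hh0 : ∀ t ∈ Set.Icc (0:ℝ) 1, 0 ≤ h t)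
    (hh1 : ∃ t ∈ Set.Icc (0:ℝ) 1, h t ≠ 0) (hhalf : 0 < h (1 / 2))
    (f f' f'' : ℝ → ℝ)
    (hf' : ∀ x ∈ interior I, HasDerivAt f (f' x) x)
    (hf'' : ∀ x ∈ interior I, HasDerivAt f' (f'' x) x)
    (a b : ℝ) (ha : a ∈ interior I) (hb : b ∈ interior I) (hab : a < b)
    (hint : IntervalIntegrable f'' volume a b)
    (q p : ℝ) (hq : 1 < q) (hp : p = q / (q - 1))
    (hconc : ∀ x ∈ Set.Icc a b, ∀ y ∈ Set.Icc a b, ∀ t ∈ Set.Ioo (0:ℝ) 1,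
      h t * |f'' x| ^ q + h (1 - t) * |f'' y| ^ q ≤ |f'' (t * x + (1 - t) * y)| ^ q) :
    |(f a + f b) / 2 - (1 / (b - a)) * ∫ x in a..b, f x| ≤
      (b - a) ^ 2 / 32 *
        (∫ t in (0:ℝ)..1, t ^ ((1:ℝ) / 2 - 1) * (1 - t) ^ (p + 1 - 1)) ^ (1 / p) *
        (1 / h (1 / 2)) ^ (1 / q) *
        (|f'' ((a + 3 * b) / 4)| + |f'' ((3 * a + b) / 4)|) := by
  have hba : (0:ℝ) < b - a := by linarith
  have hq0 : (0:ℝ) < q := by linarith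
  have hq10 : (0:ℝ) < q - 1 := by linarith
  have hp1 : 1 < p := by rw [hp, lt_div_iff₀ hq10]; linarith
  have hp0 : (0:ℝ) < p := by linarith
  have hpq : Real.HolderConjugate p q := by
    rw [Real.holderConjugate_iff]
    constructor
    · exact hp1
    · rw [hp]
      field_simp
      ring
  have hIcc : Set.Icc a b ⊆ interior I := (hI.interior).out ha hb
  set B : ℝ := ∫ t in (0:ℝ)..1, t ^ ((1:ℝ)/2 - 1) * (1 - t) ^ (p + 1 - 1) with hBdef
  -- ==================== trapezoid identity ====================
  have hf'int : IntervalIntegrable f' volume a b := by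
    apply ContinuousOn.intervalIntegrable
    intro x hx
    rw [Set.uIcc_of_le hab.le] at hx
    exact (hf'' x (hIcc hx)).continuousAt.continuousWithinAt
  have hwd : ∀ x ∈ Set.uIcc a b, HasDerivAt (fun x => (x - a) * (b - x)) (a + b - 2*x) x := by
    intro x _
    have h1 := ((hasDerivAt_id x).sub_const a).mul ((hasDerivAt_const x b).sub (hasDerivAt_id x))
    refine h1.congr_deriv ?_
    simp
    ring
  have hud : ∀ x ∈ Set.uIcc a b, HasDerivAt (fun x : ℝ => a + b - 2*x) (-2) x := by
    intro x _
    exact ((hasDerivAt_const x (a+b)).sub ((hasDerivAt_id x).const_mul (2:ℝ))).congr_deriv (by ring)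
  have hIBP1 : ∫ x in a..b, (x - a) * (b - x) * f'' x
      = (b-a)*(b-b)*f' b - (a-a)*(b-a)*f' a - ∫ x in a..b, (a + b - 2*x) * f' x := by
    apply intervalIntegral.integral_mul_deriv_eq_deriv_mul hwd
      (fun x hx => hf'' x (hIcc (by rwa [Set.uIcc_of_le hab.le] at hx)))
      (by apply ContinuousOn.intervalIntegrable; fun_prop) hint
  have hIBP2 : ∫ x in a..b, (a + b - 2*x) * f' x
      = (a + b - 2*b)*f b - (a + b - 2*a)*f a - ∫ x in a..b, (-2) * f x := by
    apply intervalIntegral.integral_mul_deriv_eq_deriv_mul hud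
      (fun x hx => hf' x (hIcc (by rwa [Set.uIcc_of_le hab.le] at hx)))
      (by apply ContinuousOn.intervalIntegrable; fun_prop) hf'int
  have key : ∫ x in a..b, (x - a) * (b - x) * f'' x
      = (b-a)*(f a + f b) - 2 * ∫ x in a..b, f x := by
    rw [hIBP1, hIBP2, intervalIntegral.integral_const_mul]
    ring
  have hLHS : (f a + f b) / 2 - (1 / (b - a)) * ∫ x in a..b, f x
      = (∫ x in a..b, (x - a) * (b - x) * f'' x) / (2*(b-a)) := by
    rw [key]
    field_simp
  -- ==================== measurability / integrability ====================
  have hGqint : ∀ α β C : ℝ, a ≤ α → α ≤ β → β ≤ b →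
      (∀ x ∈ Set.Icc α β, |f'' x| ^ q ≤ C) →
      IntervalIntegrable (fun x => |f'' x| ^ q) volume α β := by
    intro α β C haα hαβ hβb hbd
    rw [intervalIntegrable_iff, Set.uIoc_of_le hαβ]
    have hcontq : Continuous (fun y : ℝ => y ^ q) :=
      continuous_iff_continuousAt.mpr (fun y => Real.continuousAt_rpow_const y q (Or.inr hq0.le))
    have hmeas0 : Measurable (fun x => |deriv f' x| ^ q) :=
      hcontq.measurable.comp (measurable_deriv f').abs
    have hmeas : AEStronglyMeasurable (fun x => |f'' x| ^ q)
        (volume.restrict (Set.Ioc α β)) := by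
      apply hmeas0.aestronglyMeasurable.restrict.congr
      filter_upwards [ae_restrict_mem measurableSet_Ioc] with x hx
      have hx' : x ∈ Set.Icc a b := ⟨le_trans haα hx.1.le, le_trans hx.2 hβb⟩
      rw [((hf'' x (hIcc hx')).deriv)]
    apply MeasureTheory.Integrable.mono' (integrable_const (max C 0)) hmeas
    filter_upwards [ae_restrict_mem measurableSet_Ioc] with x hx
    rw [Real.norm_eq_abs, abs_of_nonneg (Real.rpow_nonneg (abs_nonneg _) _)]
    exact le_trans (hbd x ⟨hx.1.le, hx.2⟩) (le_max_left _ _)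
  -- ==================== pointwise reflection bounds ====================
  have hrefl2 : ∀ x ∈ Set.Icc ((a+b)/2) b,
      |f'' x| ^ q + |f'' ((a+b)/2 + b - x)| ^ q ≤ |f'' ((a + 3 * b) / 4)| ^ q / h (1/2) := by
    intro x hx
    have hy : (a+b)/2 + b - x ∈ Set.Icc ((a+b)/2) b := ⟨by linarith [hx.2], by linarith [hx.1]⟩
    have h3 := hconc x ⟨by linarith [hx.1], hx.2⟩ ((a+b)/2 + b - x)
      ⟨by linarith [hy.1], hy.2⟩ (1/2) ⟨by norm_num, by norm_num⟩
    rw [show (1:ℝ) - 1/2 = 1/2 by norm_num] at h3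
    rw [show (1:ℝ)/2 * x + 1/2 * ((a+b)/2 + b - x) = (a + 3 * b) / 4 by ring] at h3
    rw [le_div_iff₀ hhalf]
    linarith
  have hrefl1 : ∀ x ∈ Set.Icc a ((a+b)/2),
      |f'' x| ^ q + |f'' (a + (a+b)/2 - x)| ^ q ≤ |f'' ((3 * a + b) / 4)| ^ q / h (1/2) := by
    intro x hx
    have hy : a + (a+b)/2 - x ∈ Set.Icc a ((a+b)/2) := ⟨by linarith [hx.2], by linarith [hx.1]⟩
    have h3 := hconc x ⟨hx.1, by linarith [hx.2]⟩ (a + (a+b)/2 - x)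
      ⟨hy.1, by linarith [hy.2]⟩ (1/2) ⟨by norm_num, by norm_num⟩
    rw [show (1:ℝ) - 1/2 = 1/2 by norm_num] at h3
    rw [show (1:ℝ)/2 * x + 1/2 * (a + (a+b)/2 - x) = (3 * a + b) / 4 by ring] at h3
    rw [le_div_iff₀ hhalf]
    linarith
  have hpt2 : ∀ x ∈ Set.Icc ((a+b)/2) b, |f'' x| ^ q ≤ |f'' ((a + 3 * b) / 4)| ^ q / h (1/2) := by
    intro x hx
    have h4 := hrefl2 x hx
    have h5 : 0 ≤ |f'' ((a+b)/2 + b - x)| ^ q := Real.rpow_nonneg (abs_nonneg _) _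
    linarith
  have hpt1 : ∀ x ∈ Set.Icc a ((a+b)/2), |f'' x| ^ q ≤ |f'' ((3 * a + b) / 4)| ^ q / h (1/2) := by
    intro x hx
    have h4 := hrefl1 x hx
    have h5 : 0 ≤ |f'' (a + (a+b)/2 - x)| ^ q := Real.rpow_nonneg (abs_nonneg _) _
    linarith
  have hGq2 : IntervalIntegrable (fun x => |f'' x| ^ q) volume ((a+b)/2) b :=
    hGqint _ _ _ (by linarith) (by linarith) le_rfl hpt2
  have hGq1 : IntervalIntegrable (fun x => |f'' x| ^ q) volume a ((a+b)/2) :=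
    hGqint _ _ _ le_rfl (by linarith) (by linarith) hpt1
  -- ==================== Y bounds ====================
  have hY2 : (∫ x in ((a+b)/2)..b, |f'' x| ^ q)
      ≤ (b-a) * |f'' ((a + 3 * b) / 4)| ^ q / (4 * h (1/2)) := by
    have h5 := aux_reflect (by linarith : (a+b)/2 ≤ b) hGq2 hrefl2
    calc (∫ x in ((a+b)/2)..b, |f'' x| ^ q)
        ≤ (b - (a+b)/2) * (|f'' ((a + 3 * b) / 4)| ^ q / h (1/2)) / 2 := h5
      _ = (b-a) * |f'' ((a + 3 * b) / 4)| ^ q / (4 * h (1/2)) := by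
          field_simp
          ring
  have hY1 : (∫ x in a..((a+b)/2), |f'' x| ^ q)
      ≤ (b-a) * |f'' ((3 * a + b) / 4)| ^ q / (4 * h (1/2)) := by
    have h5 := aux_reflect (by linarith : a ≤ (a+b)/2) hGq1 hrefl1
    calc (∫ x in a..((a+b)/2), |f'' x| ^ q)
        ≤ ((a+b)/2 - a) * (|f'' ((3 * a + b) / 4)| ^ q / h (1/2)) / 2 := h5
      _ = (b-a) * |f'' ((3 * a + b) / 4)| ^ q / (4 * h (1/2)) := by
          field_simp
          ring
  -- ==================== X bounds ====================
  have hwcont : Continuous (fun x : ℝ => ((x - a) * (b - x)) ^ p) := by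
    rw [continuous_iff_continuousAt]
    intro x
    exact (Real.continuousAt_rpow_const _ _ (Or.inr hp0.le)).comp
      (((continuous_id.sub continuous_const).mul (continuous_const.sub continuous_id)).continuousAt)
  have hX2 : (∫ x in ((a+b)/2)..b, ((x - a) * (b - x)) ^ p) ≤ (b-a)^(2*p+1) * B / 4^(p+1) :=
    aux_xbound hab hp1
  have hX2pos : 0 < ∫ x in ((a+b)/2)..b, ((x - a) * (b - x)) ^ p := by
    apply intervalIntegral.intervalIntegral_pos_of_pos_on (hwcont.intervalIntegrable _ _)
    · intro x hx
      exact Real.rpow_pos_of_pos (by nlinarith [hx.1, hx.2] : (0:ℝ) < (x - a) * (b - x)) p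
    · linarith
  have hXbar0 : 0 < (b-a)^(2*p+1) * B / 4^(p+1) := lt_of_lt_of_le hX2pos hX2
  have hB0 : 0 < B := by
    by_contra hcon
    push_neg at hcon
    have h6 : (b-a)^(2*p+1) * B ≤ 0 :=
      mul_nonpos_of_nonneg_of_nonpos (Real.rpow_nonneg hba.le _) hcon
    have h7 : (b-a)^(2*p+1) * B / 4^(p+1) ≤ 0 :=
      div_nonpos_of_nonpos_of_nonneg h6 (Real.rpow_nonneg (by norm_num) _)
    linarith
  have hX1 : (∫ x in a..((a+b)/2), ((x - a) * (b - x)) ^ p) ≤ (b-a)^(2*p+1) * B / 4^(p+1) := by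
    have h8 := intervalIntegral.integral_comp_sub_left
      (a := (a+b)/2) (b := b) (fun x => ((x - a) * (b - x)) ^ p) (a+b)
    rw [show a + b - b = a by ring, show a + b - (a+b)/2 = (a+b)/2 by ring] at h8
    rw [← h8]
    have h9 : (∫ x in ((a+b)/2)..b, ((a + b - x - a) * (b - (a + b - x))) ^ p)
        = ∫ x in ((a+b)/2)..b, ((x - a) * (b - x)) ^ p := by
      apply intervalIntegral.integral_congr
      intro x _
      congr 1
      ring
    rw [h9]
    exact hX2
  -- ==================== integrability of w * |f''| ====================
  have habsint : IntervalIntegrable (fun x => |f'' x|) volume a b := hint.abs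
  have hwGint : IntervalIntegrable (fun x => (x - a) * (b - x) * |f'' x|) volume a b := by
    apply habsint.continuousOn_mul
    fun_prop
  have hmem1 : Set.uIcc a ((a+b)/2) ⊆ Set.uIcc a b := by
    apply Set.uIcc_subset_uIcc
    · rw [Set.uIcc_of_le hab.le]; exact ⟨le_rfl, hab.le⟩
    · rw [Set.uIcc_of_le hab.le]; constructor <;> linarith
  have hmem2 : Set.uIcc ((a+b)/2) b ⊆ Set.uIcc a b := by
    apply Set.uIcc_subset_uIcc
    · rw [Set.uIcc_of_le hab.le]; constructor <;> linarith
    · rw [Set.uIcc_of_le hab.le]; exact ⟨hab.le, le_rfl⟩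
  have hwG1int := hwGint.mono_set hmem1
  have hwG2int := hwGint.mono_set hmem2
  -- ==================== per-half estimates ====================
  have hT2 : (∫ x in ((a+b)/2)..b, (x - a) * (b - x) * |f'' x|)
      ≤ ((b-a)^(3:ℕ) * B^(1/p) * (1/h (1/2))^(1/q) / 16) * |f'' ((a + 3 * b) / 4)| := by
    rcases eq_or_lt_of_le (abs_nonneg (f'' ((a + 3 * b) / 4))) with h0 | hA2pos
    · have hz : ∀ x ∈ Set.Icc ((a+b)/2) b, |f'' x| = 0 := by
        intro x hx
        have h5 := hpt2 x hx
        rw [← h0, Real.zero_rpow hq0.ne', zero_div] at h5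
        have h6 : 0 ≤ |f'' x| ^ q := Real.rpow_nonneg (abs_nonneg _) _
        exact (Real.rpow_eq_zero (abs_nonneg _) hq0.ne').mp (le_antisymm h5 h6)
      have hzz : Set.EqOn (fun x => (x - a) * (b - x) * |f'' x|) (fun _ => (0:ℝ))
          (Set.uIcc ((a+b)/2) b) := by
        rw [Set.uIcc_of_le (by linarith : (a+b)/2 ≤ b)]
        intro x hx
        simp [hz x hx]
      rw [intervalIntegral.integral_congr hzz]
      simp only [intervalIntegral.integral_const, smul_zero]
      rw [← h0, mul_zero]
    · have happ := aux_young_opt (w := fun x => (x - a) * (b - x)) (g := fun x => |f'' x|)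
        hpq (by linarith : (a+b)/2 ≤ b)
        (fun x hx => mul_nonneg (by linarith [hx.1] : (0:ℝ) ≤ x - a)
          (by linarith [hx.2] : (0:ℝ) ≤ b - x)) (fun x _ => abs_nonneg _)
        hwG2int (hwcont.intervalIntegrable _ _) hGq2
        hXbar0 (by positivity : (0:ℝ) < (b-a) * |f'' ((a + 3 * b) / 4)| ^ q / (4 * h (1/2)))
        hX2 hY2
      calc (∫ x in ((a+b)/2)..b, (x - a) * (b - x) * |f'' x|)
          ≤ ((b-a)^(2*p+1) * B / 4^(p+1))^(1/p)
            * ((b-a) * |f'' ((a + 3 * b) / 4)| ^ q / (4 * h (1/2)))^(1/q) := happ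
        _ = (b-a)^(3:ℕ) * B^(1/p) * (1/h (1/2))^(1/q) * |f'' ((a + 3 * b) / 4)| / 16 :=
            aux_arith hpq hba hB0 hhalf hA2pos
        _ = ((b-a)^(3:ℕ) * B^(1/p) * (1/h (1/2))^(1/q) / 16) * |f'' ((a + 3 * b) / 4)| := by
            ring
  have hT1 : (∫ x in a..((a+b)/2), (x - a) * (b - x) * |f'' x|)
      ≤ ((b-a)^(3:ℕ) * B^(1/p) * (1/h (1/2))^(1/q) / 16) * |f'' ((3 * a + b) / 4)| := by
    rcases eq_or_lt_of_le (abs_nonneg (f'' ((3 * a + b) / 4))) with h0 | hA1pos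
    · have hz : ∀ x ∈ Set.Icc a ((a+b)/2), |f'' x| = 0 := by
        intro x hx
        have h5 := hpt1 x hx
        rw [← h0, Real.zero_rpow hq0.ne', zero_div] at h5
        have h6 : 0 ≤ |f'' x| ^ q := Real.rpow_nonneg (abs_nonneg _) _
        exact (Real.rpow_eq_zero (abs_nonneg _) hq0.ne').mp (le_antisymm h5 h6)
      have hzz : Set.EqOn (fun x => (x - a) * (b - x) * |f'' x|) (fun _ => (0:ℝ))
          (Set.uIcc a ((a+b)/2)) := by
        rw [Set.uIcc_of_le (by linarith : a ≤ (a+b)/2)]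
        intro x hx
        simp [hz x hx]
      rw [intervalIntegral.integral_congr hzz]
      simp only [intervalIntegral.integral_const, smul_zero]
      rw [← h0, mul_zero]
    · have happ := aux_young_opt (w := fun x => (x - a) * (b - x)) (g := fun x => |f'' x|)
        hpq (by linarith : a ≤ (a+b)/2)
        (fun x hx => mul_nonneg (by linarith [hx.1] : (0:ℝ) ≤ x - a)
          (by linarith [hx.2] : (0:ℝ) ≤ b - x)) (fun x _ => abs_nonneg _)
        hwG1int (hwcont.intervalIntegrable _ _) hGq1
        hXbar0 (by positivity : (0:ℝ) < (b-a) * |f'' ((3 * a + b) / 4)| ^ q / (4 * h (1/2)))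
        hX1 hY1
      calc (∫ x in a..((a+b)/2), (x - a) * (b - x) * |f'' x|)
          ≤ ((b-a)^(2*p+1) * B / 4^(p+1))^(1/p)
            * ((b-a) * |f'' ((3 * a + b) / 4)| ^ q / (4 * h (1/2)))^(1/q) := happ
        _ = (b-a)^(3:ℕ) * B^(1/p) * (1/h (1/2))^(1/q) * |f'' ((3 * a + b) / 4)| / 16 :=
            aux_arith hpq hba hB0 hhalf hA1pos
        _ = ((b-a)^(3:ℕ) * B^(1/p) * (1/h (1/2))^(1/q) / 16) * |f'' ((3 * a + b) / 4)| := by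
            ring
  -- ==================== assembly ====================
  have habs : |∫ x in a..b, (x - a) * (b - x) * f'' x|
      ≤ ∫ x in a..b, (x - a) * (b - x) * |f'' x| := by
    calc |∫ x in a..b, (x - a) * (b - x) * f'' x|
        ≤ ∫ x in a..b, |(x - a) * (b - x) * f'' x| :=
          intervalIntegral.abs_integral_le_integral_abs hab.le
      _ = ∫ x in a..b, (x - a) * (b - x) * |f'' x| := by
          apply intervalIntegral.integral_congr
          intro x hx
          rw [Set.uIcc_of_le hab.le] at hx
          simp only []
          rw [abs_mul, abs_of_nonneg (by nlinarith [hx.1, hx.2] : (0:ℝ) ≤ (x - a) * (b - x))]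
  have hsplit : (∫ x in a..((a+b)/2), (x - a) * (b - x) * |f'' x|)
      + (∫ x in ((a+b)/2)..b, (x - a) * (b - x) * |f'' x|)
      = ∫ x in a..b, (x - a) * (b - x) * |f'' x| :=
    intervalIntegral.integral_add_adjacent_intervals hwG1int hwG2int
  rw [hLHS, abs_div, abs_of_pos (by linarith : (0:ℝ) < 2*(b-a)),
    div_le_iff₀ (by linarith : (0:ℝ) < 2*(b-a))]
  calc |∫ x in a..b, (x - a) * (b - x) * f'' x|
      ≤ ∫ x in a..b, (x - a) * (b - x) * |f'' x| := habs
    _ = (∫ x in a..((a+b)/2), (x - a) * (b - x) * |f'' x|)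
        + (∫ x in ((a+b)/2)..b, (x - a) * (b - x) * |f'' x|) := hsplit.symm
    _ ≤ ((b-a)^(3:ℕ) * B^(1/p) * (1/h (1/2))^(1/q) / 16) * |f'' ((3 * a + b) / 4)|
        + ((b-a)^(3:ℕ) * B^(1/p) * (1/h (1/2))^(1/q) / 16) * |f'' ((a + 3 * b) / 4)| :=
        add_le_add hT1 hT2
    _ = (b - a) ^ 2 / 32 * B ^ (1 / p) * (1 / h (1 / 2)) ^ (1 / q) *
        (|f'' ((a + 3 * b) / 4)| + |f'' ((3 * a + b) / 4)|) * (2*(b-a)) := by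
        ring
end

section
/- Let f : I ⊂ ℝ → ℝ be a twice differentiable function on the interior I° of the interval I, let a, b ∈ I° with a < b, and suppose f'' is integrable on [a, b]. Then (1/(b−a)) ∫_a^b f(x) dx − f((a+b)/2) = ((b−a)²/4) ∫_0^1 m(t) [ f''(t·a + (1−t)·b) + f''(t·b + (1−t)·a) ] dt, where m(t) = t² for t ∈ [0, 1/2) and m(t) = (1−t)² for t ∈ [1/2, 1]. -/
open MeasureTheory intervalIntegral

/-- Auxiliary kernel `((b - x)/(b - a))^2 * f'' x`. -/
noncomputable def stmtG1 (f'' : ℝ → ℝ) (a b : ℝ) (x : ℝ) : ℝ := ((b - x) / (b - a)) ^ 2 * f'' x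

/-- Auxiliary kernel `((x - a)/(b - a))^2 * f'' x`. -/
noncomputable def stmtG2 (f'' : ℝ → ℝ) (a b : ℝ) (x : ℝ) : ℝ := ((x - a) / (b - a)) ^ 2 * f'' x

/-- Interval integrability is preserved by affine substitution, with prescribed endpoints. -/
theorem stmt_comp_aff (g : ℝ → ℝ) (k d p r P R : ℝ) (hk : k ≠ 0)
    (hP : k * p + d = P) (hR : k * r + d = R)
    (hg : IntervalIntegrable g volume P R) :
    IntervalIntegrable (fun t => g (k * t + d)) volume p r := by
  subst hP; subst hR
  simpa only [add_sub_cancel_right, mul_div_cancel_left₀ _ hk] using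
    (hg.comp_add_right d).comp_mul_left (c := k)

/-- Lemma 2: midpoint identity for twice differentiable functions. -/
theorem stmt_5 (I : Set ℝ) (hI : I.OrdConnected)
    (f f' f'' : ℝ → ℝ)
    (hf' : ∀ x ∈ interior I, HasDerivAt f (f' x) x)
    (hf'' : ∀ x ∈ interior I, HasDerivAt f' (f'' x) x)
    (a b : ℝ) (ha : a ∈ interior I) (hb : b ∈ interior I) (hab : a < b)
    (hint : IntervalIntegrable f'' volume a b)
    (m : ℝ → ℝ)
    (hm : ∀ t ∈ Set.Icc (0:ℝ) 1, m t = if t < 1 / 2 then t ^ 2 else (1 - t) ^ 2) :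
    (1 / (b - a)) * ∫ x in a..b, f x - f ((a + b) / 2) =
      (b - a) ^ 2 / 4 *
        ∫ t in (0:ℝ)..1, m t * (f'' (t * a + (1 - t) * b) + f'' (t * b + (1 - t) * a)) := by
  have hba : (0:ℝ) < b - a := sub_pos.2 hab
  have hba' : b - a ≠ 0 := ne_of_gt hba
  have hab' : a - b ≠ 0 := by intro h; apply hba'; linarith
  have haq : a ≤ (a + b) / 2 := by linarith
  have hqb : (a + b) / 2 ≤ b := by linarith
  -- the closed interval is inside the interior
  have hIccI : Set.Icc a b ⊆ interior I := by
    have hsub : Set.Icc a b ⊆ I := hI.out (interior_subset ha) (interior_subset hb)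
    have hIoo : Set.Ioo a b ⊆ interior I :=
      interior_maximal (Set.Ioo_subset_Icc_self.trans hsub) isOpen_Ioo
    intro x hx
    rcases eq_or_lt_of_le hx.1 with rfl | h1
    · exact ha
    rcases eq_or_lt_of_le hx.2 with rfl | h2
    · exact hb
    exact hIoo ⟨h1, h2⟩
  have hsub1 : Set.uIcc a ((a + b) / 2) ⊆ Set.Icc a b := by
    rw [Set.uIcc_of_le haq]; exact Set.Icc_subset_Icc le_rfl hqb
  have hsub2 : Set.uIcc ((a + b) / 2) b ⊆ Set.Icc a b := by
    rw [Set.uIcc_of_le hqb]; exact Set.Icc_subset_Icc haq le_rfl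
  have huIcc : Set.uIcc a b = Set.Icc a b := Set.uIcc_of_le hab.le
  -- continuity and integrability basics
  have hfc : ContinuousOn f (Set.Icc a b) := fun x hx =>
    (hf' x (hIccI hx)).continuousAt.continuousWithinAt
  have hf'c : ContinuousOn f' (Set.Icc a b) := fun x hx =>
    (hf'' x (hIccI hx)).continuousAt.continuousWithinAt
  have hf_int : ∀ p r : ℝ, Set.uIcc p r ⊆ Set.Icc a b → IntervalIntegrable f volume p r :=
    fun p r h => (hfc.mono h).intervalIntegrable
  have hf'_int : ∀ p r : ℝ, Set.uIcc p r ⊆ Set.Icc a b → IntervalIntegrable f' volume p r :=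
    fun p r h => (hf'c.mono h).intervalIntegrable
  have hf''_int : ∀ p r : ℝ, Set.uIcc p r ⊆ Set.Icc a b → IntervalIntegrable f'' volume p r :=
    fun p r h => hint.mono_set (by rw [huIcc]; exact h)
  -- integration by parts on [a, (a+b)/2]
  have h1 : (∫ x in a..((a + b) / 2), (x - a) ^ 2 * f'' x)
      = ((a + b) / 2 - a) ^ 2 * f' ((a + b) / 2) - (a - a) ^ 2 * f' a
        - ∫ x in a..((a + b) / 2), (2 * (x - a)) * f' x := by
    apply intervalIntegral.integral_mul_deriv_eq_deriv_mul (u := fun x => (x - a) ^ 2)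
      (u' := fun x => 2 * (x - a)) (v := f') (v' := f'')
    · intro x hx
      have h := ((hasDerivAt_id x).sub_const a).pow 2
      refine h.congr_deriv ?_
      simp only [id_eq]; push_cast; ring
    · exact fun x hx => hf'' x (hIccI (hsub1 hx))
    · exact (Continuous.intervalIntegrable (by fun_prop) _ _)
    · exact hf''_int _ _ hsub1
  have h2 : (∫ x in a..((a + b) / 2), (2 * (x - a)) * f' x)
      = 2 * ((a + b) / 2 - a) * f ((a + b) / 2) - 2 * (a - a) * f a
        - ∫ x in a..((a + b) / 2), 2 * f x := by
    apply intervalIntegral.integral_mul_deriv_eq_deriv_mul (u := fun x => 2 * (x - a))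
      (u' := fun _ => 2) (v := f) (v' := f')
    · intro x hx
      simpa using ((hasDerivAt_id x).sub_const a).const_mul 2
    · exact fun x hx => hf' x (hIccI (hsub1 hx))
    · exact (Continuous.intervalIntegrable (by fun_prop) _ _)
    · exact hf'_int _ _ hsub1
  -- integration by parts on [(a+b)/2, b]
  have h3 : (∫ x in ((a + b) / 2)..b, (b - x) ^ 2 * f'' x)
      = (b - b) ^ 2 * f' b - (b - (a + b) / 2) ^ 2 * f' ((a + b) / 2)
        - ∫ x in ((a + b) / 2)..b, (-(2 * (b - x))) * f' x := by
    apply intervalIntegral.integral_mul_deriv_eq_deriv_mul (u := fun x => (b - x) ^ 2)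
      (u' := fun x => -(2 * (b - x))) (v := f') (v' := f'')
    · intro x hx
      have h := ((hasDerivAt_id x).const_sub b).pow 2
      refine h.congr_deriv ?_
      simp only [id_eq]; push_cast; ring
    · exact fun x hx => hf'' x (hIccI (hsub2 hx))
    · exact (Continuous.intervalIntegrable (by fun_prop) _ _)
    · exact hf''_int _ _ hsub2
  have h4 : (∫ x in ((a + b) / 2)..b, (-(2 * (b - x))) * f' x)
      = (-(2 * (b - b))) * f b - (-(2 * (b - (a + b) / 2))) * f ((a + b) / 2)
        - ∫ x in ((a + b) / 2)..b, 2 * f x := by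
    apply intervalIntegral.integral_mul_deriv_eq_deriv_mul (u := fun x => -(2 * (b - x)))
      (u' := fun _ => 2) (v := f) (v' := f')
    · intro x hx
      have h := (((hasDerivAt_id x).const_sub b).const_mul 2).neg
      refine h.congr_deriv ?_
      ring
    · exact fun x hx => hf' x (hIccI (hsub2 hx))
    · exact (Continuous.intervalIntegrable (by fun_prop) _ _)
    · exact hf'_int _ _ hsub2
  -- the key sum
  have hS : (∫ x in a..((a + b) / 2), (x - a) ^ 2 * f'' x)
        + (∫ x in ((a + b) / 2)..b, (b - x) ^ 2 * f'' x)
      = 2 * (∫ x in a..b, f x) - 2 * (b - a) * f ((a + b) / 2) := by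
    have hadd : (∫ x in a..((a + b) / 2), f x) + ∫ x in ((a + b) / 2)..b, f x
        = ∫ x in a..b, f x :=
      integral_add_adjacent_intervals (hf_int _ _ hsub1) (hf_int _ _ hsub2)
    rw [h1, h2, h3, h4, intervalIntegral.integral_const_mul, intervalIntegral.integral_const_mul, ← hadd]
    ring
  -- pointwise identification of the integrand on [0, 1/2]
  have key_eq1 : Set.EqOn
      (fun t => m t * (f'' (t * a + (1 - t) * b) + f'' (t * b + (1 - t) * a)))
      (fun t => stmtG1 f'' a b ((a - b) * t + b) + stmtG2 f'' a b ((b - a) * t + a))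
      (Set.uIcc (0:ℝ) (1 / 2)) := by
    intro t ht
    rw [Set.uIcc_of_le (by norm_num : (0:ℝ) ≤ 1 / 2)] at ht
    have ht1 : t ∈ Set.Icc (0:ℝ) 1 := ⟨ht.1, by linarith [ht.2]⟩
    have hmt : m t = t ^ 2 := by
      rw [hm t ht1]
      split_ifs with h
      · rfl
      · have : t = 1 / 2 := le_antisymm ht.2 (not_lt.1 h)
        rw [this]; norm_num
    have e1 : (a - b) * t + b = t * a + (1 - t) * b := by ring
    have e2 : (b - a) * t + a = t * b + (1 - t) * a := by ring
    have e3 : (b - (t * a + (1 - t) * b)) / (b - a) = t := by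
      rw [show b - (t * a + (1 - t) * b) = t * (b - a) by ring]
      exact mul_div_cancel_right₀ t hba'
    have e4 : ((t * b + (1 - t) * a) - a) / (b - a) = t := by
      rw [show (t * b + (1 - t) * a) - a = t * (b - a) by ring]
      exact mul_div_cancel_right₀ t hba'
    simp only [stmtG1, stmtG2, e1, e2, e3, e4, hmt]
    ring
  -- pointwise identification of the integrand on [1/2, 1]
  have key_eq2 : Set.EqOn
      (fun t => m t * (f'' (t * a + (1 - t) * b) + f'' (t * b + (1 - t) * a)))
      (fun t => stmtG2 f'' a b ((a - b) * t + b) + stmtG1 f'' a b ((b - a) * t + a))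
      (Set.uIcc (1 / 2 : ℝ) 1) := by
    intro t ht
    rw [Set.uIcc_of_le (by norm_num : (1 / 2:ℝ) ≤ 1)] at ht
    have ht1 : t ∈ Set.Icc (0:ℝ) 1 := ⟨by linarith [ht.1], ht.2⟩
    have hmt : m t = (1 - t) ^ 2 := by
      rw [hm t ht1, if_neg (not_lt.2 ht.1)]
    have e1 : (a - b) * t + b = t * a + (1 - t) * b := by ring
    have e2 : (b - a) * t + a = t * b + (1 - t) * a := by ring
    have e3 : ((t * a + (1 - t) * b) - a) / (b - a) = 1 - t := by
      rw [show (t * a + (1 - t) * b) - a = (1 - t) * (b - a) by ring]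
      exact mul_div_cancel_right₀ _ hba'
    have e4 : (b - (t * b + (1 - t) * a)) / (b - a) = 1 - t := by
      rw [show b - (t * b + (1 - t) * a) = (1 - t) * (b - a) by ring]
      exact mul_div_cancel_right₀ _ hba'
    simp only [stmtG1, stmtG2, e1, e2, e3, e4, hmt]
    ring
  -- integrability of the G kernels
  have hG1int : IntervalIntegrable (stmtG1 f'' a b) volume ((a + b) / 2) b :=
    (hf''_int _ _ hsub2).continuousOn_mul (Continuous.continuousOn (by fun_prop))
  have hG2int : IntervalIntegrable (stmtG2 f'' a b) volume a ((a + b) / 2) :=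
    (hf''_int _ _ hsub1).continuousOn_mul (Continuous.continuousOn (by fun_prop))
  -- integrability of the composed kernels
  have i1A : IntervalIntegrable (fun t => stmtG1 f'' a b ((a - b) * t + b)) volume 0 (1 / 2) :=
    stmt_comp_aff _ (a - b) b 0 (1 / 2) b ((a + b) / 2) hab' (by ring) (by ring) hG1int.symm
  have i1B : IntervalIntegrable (fun t => stmtG2 f'' a b ((b - a) * t + a)) volume 0 (1 / 2) :=
    stmt_comp_aff _ (b - a) a 0 (1 / 2) a ((a + b) / 2) hba' (by ring) (by ring) hG2int
  have i2A : IntervalIntegrable (fun t => stmtG2 f'' a b ((a - b) * t + b)) volume (1 / 2) 1 :=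
    stmt_comp_aff _ (a - b) b (1 / 2) 1 ((a + b) / 2) a hab' (by ring) (by ring) hG2int.symm
  have i2B : IntervalIntegrable (fun t => stmtG1 f'' a b ((b - a) * t + a)) volume (1 / 2) 1 :=
    stmt_comp_aff _ (b - a) a (1 / 2) 1 ((a + b) / 2) b hba' (by ring) (by ring) hG1int
  -- integrability of the m-integrand on the two halves
  have iF1 : IntervalIntegrable
      (fun t => m t * (f'' (t * a + (1 - t) * b) + f'' (t * b + (1 - t) * a))) volume 0 (1 / 2) := by
    refine (i1A.add i1B).congr ?_
    intro t ht
    exact (key_eq1 (Set.uIoc_subset_uIcc ht)).symm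
  have iF2 : IntervalIntegrable
      (fun t => m t * (f'' (t * a + (1 - t) * b) + f'' (t * b + (1 - t) * a))) volume (1 / 2) 1 := by
    refine (i2A.add i2B).congr ?_
    intro t ht
    exact (key_eq2 (Set.uIoc_subset_uIcc ht)).symm
  -- first half of the t-integral
  have int_half1 : (∫ t in (0:ℝ)..(1 / 2),
        m t * (f'' (t * a + (1 - t) * b) + f'' (t * b + (1 - t) * a)))
      = (b - a)⁻¹ * ((∫ x in ((a + b) / 2)..b, stmtG1 f'' a b x)
        + ∫ x in a..((a + b) / 2), stmtG2 f'' a b x) := by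
    rw [integral_congr key_eq1, integral_add i1A i1B,
      integral_comp_mul_add (stmtG1 f'' a b) hab' b,
      integral_comp_mul_add (stmtG2 f'' a b) hba' a]
    rw [show (a - b) * 0 + b = b by ring, show (a - b) * (1 / 2) + b = (a + b) / 2 by ring,
      show (b - a) * 0 + a = a by ring, show (b - a) * (1 / 2) + a = (a + b) / 2 by ring]
    rw [integral_symm ((a + b) / 2) b, smul_eq_mul, smul_eq_mul,
      show (a - b)⁻¹ = -(b - a)⁻¹ by rw [show a - b = -(b - a) by ring, inv_neg]]
    ring
  -- second half of the t-integral
  have int_half2 : (∫ t in (1 / 2 : ℝ)..1,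
        m t * (f'' (t * a + (1 - t) * b) + f'' (t * b + (1 - t) * a)))
      = (b - a)⁻¹ * ((∫ x in a..((a + b) / 2), stmtG2 f'' a b x)
        + ∫ x in ((a + b) / 2)..b, stmtG1 f'' a b x) := by
    rw [integral_congr key_eq2, integral_add i2A i2B,
      integral_comp_mul_add (stmtG2 f'' a b) hab' b,
      integral_comp_mul_add (stmtG1 f'' a b) hba' a]
    rw [show (a - b) * (1 / 2) + b = (a + b) / 2 by ring, show (a - b) * 1 + b = a by ring,
      show (b - a) * (1 / 2) + a = (a + b) / 2 by ring, show (b - a) * 1 + a = b by ring]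
    rw [integral_symm a ((a + b) / 2), smul_eq_mul, smul_eq_mul,
      show (a - b)⁻¹ = -(b - a)⁻¹ by rw [show a - b = -(b - a) by ring, inv_neg]]
    ring
  -- total t-integral
  have int_total : (∫ t in (0:ℝ)..1,
        m t * (f'' (t * a + (1 - t) * b) + f'' (t * b + (1 - t) * a)))
      = (b - a)⁻¹ * 2 * ((∫ x in a..((a + b) / 2), stmtG2 f'' a b x)
        + ∫ x in ((a + b) / 2)..b, stmtG1 f'' a b x) := by
    rw [← integral_add_adjacent_intervals iF1 iF2, int_half1, int_half2]
    ring
  -- express the G integrals through the polynomial kernels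
  have hG2val : (∫ x in a..((a + b) / 2), stmtG2 f'' a b x)
      = ((b - a)⁻¹) ^ 2 * ∫ x in a..((a + b) / 2), (x - a) ^ 2 * f'' x := by
    rw [← intervalIntegral.integral_const_mul]
    apply integral_congr
    intro x _
    simp only [stmtG2, div_pow]
    rw [div_eq_mul_inv, inv_pow]
    ring
  have hG1val : (∫ x in ((a + b) / 2)..b, stmtG1 f'' a b x)
      = ((b - a)⁻¹) ^ 2 * ∫ x in ((a + b) / 2)..b, (b - x) ^ 2 * f'' x := by
    rw [← intervalIntegral.integral_const_mul]
    apply integral_congr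
    intro x _
    simp only [stmtG1, div_pow]
    rw [div_eq_mul_inv, inv_pow]
    ring
  -- final assembly
  have hsplit : (∫ x in a..b, (f x - f ((a + b) / 2)))
      = (∫ x in a..b, f x) - (b - a) * f ((a + b) / 2) := by
    rw [integral_sub (hf_int a b huIcc.subset) intervalIntegrable_const,
      intervalIntegral.integral_const, smul_eq_mul]
  rw [int_total, hG2val, hG1val, hsplit]
  have hfund : ((b - a)⁻¹) ^ 2 * (∫ x in a..((a + b) / 2), (x - a) ^ 2 * f'' x)
      + ((b - a)⁻¹) ^ 2 * (∫ x in ((a + b) / 2)..b, (b - x) ^ 2 * f'' x)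
      = ((b - a)⁻¹) ^ 2 * (2 * (∫ x in a..b, f x) - 2 * (b - a) * f ((a + b) / 2)) := by
    rw [← mul_add, hS]
  rw [show (b - a)^2 / 4 * ((b - a)⁻¹ * 2 * (((b - a)⁻¹) ^ 2 * (∫ x in a..((a+b)/2), (x - a) ^ 2 * f'' x) + ((b - a)⁻¹) ^ 2 * (∫ x in ((a+b)/2)..b, (b - x) ^ 2 * f'' x)))
      = (b - a)^2 / 4 * ((b - a)⁻¹ * 2 * (((b - a)⁻¹) ^ 2 * (2 * (∫ x in a..b, f x) - 2 * (b - a) * f ((a + b) / 2)))) from by rw [hfund]]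
  field_simp
  ring
end

section
/- Let h : [0,1] → ℝ be a nonnegative function not identically zero with h(1/2) > 0, and let f : I ⊂ [0,∞) → ℝ be a twice differentiable function on the interior I° of I, with a, b ∈ I°, a < b, and f'' integrable on [a, b]. Let q > 1 and p = q/(q−1). If |f''|^q is h-concave on [a, b], then |(1/(b−a)) ∫_a^b f(x) dx − f((a+b)/2)| ≤ ((b−a)²/4) · (1/(2p+1))^{1/p} · (1/(2h(1/2)))^{1/q} · |f''((a+b)/2)|. -/
open MeasureTheory intervalIntegral


lemma aux_int_sub (m x : ℝ) : ∫ t in m..x, (t - m) = (x - m) ^ 2 / 2 := by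
  have h1 : ∫ t in m..x, (t - m) = (∫ t in m..x, (t:ℝ)) - ∫ t in m..x, (m:ℝ) :=
    integral_sub intervalIntegrable_id intervalIntegrable_const
  rw [h1, integral_id, intervalIntegral.integral_const, smul_eq_mul]
  ring

lemma aux_taylor (f f' f'' : ℝ → ℝ) (a b m : ℝ) (hm : m ∈ Set.Icc a b) (M : ℝ)
    (hf' : ∀ x ∈ Set.Icc a b, HasDerivAt f (f' x) x)
    (hf'' : ∀ x ∈ Set.Icc a b, HasDerivAt f' (f'' x) x)
    (hM : ∀ x ∈ Set.Icc a b, |f'' x| ≤ M)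
    (x : ℝ) (hx : x ∈ Set.Icc a b) :
    |f x - f m - f' m * (x - m)| ≤ M / 2 * (x - m) ^ 2 := by
  have hM0 : 0 ≤ M := le_trans (abs_nonneg _) (hM m hm)
  have hsub : Set.uIcc m x ⊆ Set.Icc a b := Set.uIcc_subset_Icc hm hx
  have hlip : ∀ t ∈ Set.Icc a b, |f' t - f' m| ≤ M * |t - m| := by
    intro t ht
    have := Convex.norm_image_sub_le_of_norm_hasDerivWithin_le
      (f := f') (f' := f'') (s := Set.Icc a b)
      (fun y hy => (hf'' y hy).hasDerivWithinAt)
      (fun y hy => hM y hy) (convex_Icc a b) hm ht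
    simpa [Real.norm_eq_abs] using this
  have hf'cont : ContinuousOn f' (Set.Icc a b) := fun y hy =>
    (hf'' y hy).continuousAt.continuousWithinAt
  have hient : IntervalIntegrable f' volume m x := (hf'cont.mono hsub).intervalIntegrable
  have hftc : f x - f m = ∫ t in m..x, f' t :=
    (integral_eq_sub_of_hasDerivAt (fun t ht => hf' t (hsub ht)) hient).symm
  have hflin : f' m * (x - m) = ∫ t in m..x, f' m := by
    rw [intervalIntegral.integral_const, smul_eq_mul]; ring
  have hsplit : f x - f m - f' m * (x - m) = ∫ t in m..x, (f' t - f' m) := by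
    rw [hftc, hflin, ← integral_sub hient intervalIntegrable_const]
  rw [hsplit]
  have hbnd : ∀ᵐ t ∂(volume.restrict (Set.uIoc m x)), ‖f' t - f' m‖ ≤ M * |t - m| := by
    refine MeasureTheory.ae_restrict_of_forall_mem measurableSet_uIoc fun t ht => ?_
    simpa [Real.norm_eq_abs] using hlip t (hsub (Set.uIoc_subset_uIcc ht))
  have hgint : IntervalIntegrable (fun t => M * |t - m|) volume m x :=
    ((continuous_const.mul ((continuous_id.sub continuous_const).abs)).intervalIntegrable m x)
  have hle := intervalIntegral.norm_integral_le_abs_of_norm_le hbnd hgint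
  rw [Real.norm_eq_abs] at hle
  refine hle.trans ?_
  rcases le_total m x with hmx | hxm
  · have heq : ∫ t in m..x, M * |t - m| = M * ((x - m) ^ 2 / 2) := by
      rw [← aux_int_sub m x, ← intervalIntegral.integral_const_mul]
      refine integral_congr fun t ht => ?_
      rw [Set.uIcc_of_le hmx] at ht
      rw [abs_of_nonneg (by linarith [ht.1])]
    rw [heq, abs_of_nonneg (by positivity)]
    exact le_of_eq (by ring)
  · have heq : ∫ t in m..x, M * |t - m| = -(M * ((x - m) ^ 2 / 2)) := by
      rw [integral_symm]
      have h2 : ∫ t in x..m, M * |t - m| = M * ((x - m) ^ 2 / 2) := by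
        have h3 : ∫ t in x..m, (m - t) = (x - m) ^ 2 / 2 := by
          have h4 : ∫ t in x..m, (m - t) = - ∫ t in x..m, (t - m) := by
            rw [← intervalIntegral.integral_neg]
            exact integral_congr fun t _ => by ring
          rw [h4, integral_symm, aux_int_sub m x]
          ring_nf
        rw [← h3, ← intervalIntegral.integral_const_mul]
        refine integral_congr fun t ht => ?_
        rw [Set.uIcc_of_le hxm] at ht
        rw [abs_of_nonpos (by linarith [ht.2])]
        ring
      rw [h2]
    rw [heq, abs_neg, abs_of_nonneg (by positivity)]
    exact le_of_eq (by ring)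


/-- Theorem 13: midpoint inequality when `|f''|^q` is h-concave on `[a, b]`, `q > 1`. -/
theorem stmt_9 (I : Set ℝ) (hI : I.OrdConnected) (hI0 : I ⊆ Set.Ici (0:ℝ))
    (h : ℝ → ℝ) (hh0 : ∀ t ∈ Set.Icc (0:ℝ) 1, 0 ≤ h t)
    (hh1 : ∃ t ∈ Set.Icc (0:ℝ) 1, h t ≠ 0) (hhalf : 0 < h (1 / 2))
    (f f' f'' : ℝ → ℝ)
    (hf' : ∀ x ∈ interior I, HasDerivAt f (f' x) x)
    (hf'' : ∀ x ∈ interior I, HasDerivAt f' (f'' x) x)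
    (a b : ℝ) (ha : a ∈ interior I) (hb : b ∈ interior I) (hab : a < b)
    (hint : IntervalIntegrable f'' volume a b)
    (q p : ℝ) (hq : 1 < q) (hp : p = q / (q - 1))
    (hconc : ∀ x ∈ Set.Icc a b, ∀ y ∈ Set.Icc a b, ∀ t ∈ Set.Ioo (0:ℝ) 1,
      h t * |f'' x| ^ q + h (1 - t) * |f'' y| ^ q ≤ |f'' (t * x + (1 - t) * y)| ^ q) :
    |(1 / (b - a)) * ∫ x in a..b, f x - f ((a + b) / 2)| ≤
      (b - a) ^ 2 / 4 * (1 / (2 * p + 1)) ^ (1 / p) *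
        (1 / (2 * h (1 / 2))) ^ (1 / q) * |f'' ((a + b) / 2)| := by
  have hba : 0 < b - a := sub_pos.2 hab
  set m : ℝ := (a + b) / 2 with hmdef
  have hq0 : (0 : ℝ) < q := lt_trans one_pos hq
  have hq0' : q ≠ 0 := ne_of_gt hq0
  have hp1 : 1 < p := by
    rw [hp, lt_div_iff₀ (by linarith)]; linarith
  have hp0 : (0 : ℝ) < p := lt_trans one_pos hp1
  have hIcc : Set.Icc a b ⊆ interior I := hI.interior.out ha hb
  have hmIcc : m ∈ Set.Icc a b := ⟨by rw [hmdef]; linarith, by rw [hmdef]; linarith⟩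
  set A : ℝ := |f'' m| with hAdef
  have hA0 : 0 ≤ A := abs_nonneg _
  set M : ℝ := (h (1/2))⁻¹ ^ (1/q) * A with hMdef
  -- pointwise bound on |f''|
  have hM : ∀ x ∈ Set.Icc a b, |f'' x| ≤ M := by
    intro x hx
    have hx2 : a + b - x ∈ Set.Icc a b := ⟨by linarith [hx.2], by linarith [hx.1]⟩
    have hh := hconc x hx (a + b - x) hx2 (1/2) ⟨by norm_num, by norm_num⟩
    rw [show (1:ℝ) - 1/2 = 1/2 by norm_num] at hh
    rw [show (1/2 : ℝ) * x + 1/2 * (a + b - x) = m by rw [hmdef]; ring] at hh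
    have hpos2 : 0 ≤ h (1/2) * |f'' (a + b - x)| ^ q :=
      mul_nonneg hhalf.le (Real.rpow_nonneg (abs_nonneg _) q)
    have h5 : h (1/2) * |f'' x| ^ q ≤ A ^ q := by rw [hAdef]; linarith
    have h6 : |f'' x| ^ q ≤ (h (1/2))⁻¹ * A ^ q := by
      rw [inv_mul_eq_div, le_div_iff₀ hhalf]; linarith
    have h7 : (|f'' x| ^ q) ^ (1/q) ≤ ((h (1/2))⁻¹ * A ^ q) ^ (1/q) :=
      Real.rpow_le_rpow (Real.rpow_nonneg (abs_nonneg _) _) h6 (by positivity)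
    have e3 : (|f'' x| ^ q) ^ (1/q) = |f'' x| := by
      rw [← Real.rpow_mul (abs_nonneg _), mul_one_div, div_self hq0', Real.rpow_one]
    have e4 : ((h (1/2))⁻¹ * A ^ q) ^ (1/q) = (h (1/2))⁻¹ ^ (1/q) * A := by
      rw [Real.mul_rpow (by positivity) (Real.rpow_nonneg hA0 _),
        ← Real.rpow_mul hA0, mul_one_div, div_self hq0', Real.rpow_one]
    rw [e3, e4] at h7
    exact h7
  have hM0 : 0 ≤ M := le_trans (abs_nonneg _) (hM m hmIcc)
  -- Taylor bound
  have hkey : ∀ x ∈ Set.Icc a b, |f x - f m - f' m * (x - m)| ≤ M / 2 * (x - m) ^ 2 :=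
    aux_taylor f f' f'' a b m hmIcc M (fun x hx => hf' x (hIcc hx))
      (fun x hx => hf'' x (hIcc hx)) hM
  -- integrability
  have hfcont : ContinuousOn f (Set.Icc a b) := fun y hy =>
    (hf' y (hIcc hy)).continuousAt.continuousWithinAt
  have hfint : IntervalIntegrable f volume a b :=
    (hfcont.mono (by rw [Set.uIcc_of_le hab.le])).intervalIntegrable
  have hfmint : IntervalIntegrable (fun x => f x - f m) volume a b :=
    hfint.sub intervalIntegrable_const
  have hlinint : IntervalIntegrable (fun x => f' m * (x - m)) volume a b :=
    (continuous_const.mul (continuous_id.sub continuous_const)).intervalIntegrable a b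
  -- ∫ (x - m) = 0
  have hzero : ∫ x in a..b, (x - m) = 0 := by
    rw [integral_sub intervalIntegrable_id intervalIntegrable_const, integral_id,
      intervalIntegral.integral_const, smul_eq_mul, hmdef]; ring
  have hid : ∫ x in a..b, (f x - f m) = ∫ x in a..b, (f x - f m - f' m * (x - m)) := by
    rw [integral_sub hfmint hlinint, intervalIntegral.integral_const_mul, hzero, mul_zero,
      sub_zero]
  -- bound on the integral
  have hsq : ∫ x in a..b, (x - m) ^ 2 = (b - a) ^ 3 / 12 := by
    rw [intervalIntegral.integral_comp_sub_right (fun u => u ^ 2) m, integral_pow, hmdef]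
    push_cast; ring
  have hbint : IntervalIntegrable (fun x => M / 2 * (x - m) ^ 2) volume a b :=
    (continuous_const.mul ((continuous_id.sub continuous_const).pow 2)).intervalIntegrable a b
  have hb1 : |∫ x in a..b, (f x - f m)| ≤ M * (b - a) ^ 3 / 24 := by
    rw [hid]
    have hbnd : ∀ᵐ t ∂(volume.restrict (Set.uIoc a b)),
        ‖f t - f m - f' m * (t - m)‖ ≤ M / 2 * (t - m) ^ 2 := by
      refine MeasureTheory.ae_restrict_of_forall_mem measurableSet_uIoc fun t ht => ?_
      have ht' : t ∈ Set.Icc a b := by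
        rw [Set.uIoc_of_le hab.le] at ht; exact Set.Ioc_subset_Icc_self ht
      simpa [Real.norm_eq_abs] using hkey t ht'
    have hle := intervalIntegral.norm_integral_le_abs_of_norm_le hbnd hbint
    rw [Real.norm_eq_abs] at hle
    refine hle.trans ?_
    rw [intervalIntegral.integral_const_mul, hsq]
    rw [abs_of_nonneg (by positivity)]
    exact le_of_eq (by ring)
  -- final arithmetic
  have hL : |(1 / (b - a)) * ∫ x in a..b, (f x - f m)| ≤ M * (b - a) ^ 2 / 24 := by
    rw [abs_mul, abs_of_pos (by positivity : (0:ℝ) < 1 / (b - a))]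
    calc (1 / (b - a)) * |∫ x in a..b, (f x - f m)|
        ≤ (1 / (b - a)) * (M * (b - a) ^ 3 / 24) := by
          exact mul_le_mul_of_nonneg_left hb1 (by positivity)
      _ = M * (b - a) ^ 2 / 24 := by field_simp
  refine hL.trans ?_
  -- compare constants
  set E : ℝ := (2 : ℝ) ^ (1/q) with hEdef
  set B : ℝ := (1 / (2 * h (1/2))) ^ (1/q) with hBdef
  set D : ℝ := (2 * p + 1) ^ (1/p) with hDdef
  have hB0 : 0 ≤ B := Real.rpow_nonneg (by positivity) _
  have hD0 : 0 < D := Real.rpow_pos_of_pos (by linarith) _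
  have hE0 : 0 ≤ E := Real.rpow_nonneg (by norm_num) _
  have hfact1 : (h (1/2))⁻¹ ^ (1/q) = E * B := by
    rw [hEdef, hBdef, ← Real.mul_rpow (by norm_num) (by positivity)]
    congr 1
    field_simp
  have hfact2 : E ≤ 2 := by
    rw [hEdef]
    calc (2:ℝ) ^ (1/q) ≤ (2:ℝ) ^ (1:ℝ) :=
          Real.rpow_le_rpow_of_exponent_le one_le_two
            (by rw [div_le_one hq0]; linarith)
      _ = 2 := Real.rpow_one 2
  have hfact3 : 2 * p + 1 ≤ (3:ℝ) ^ p := by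
    have hlog3 : 1 ≤ Real.log 3 := by
      rw [Real.le_log_iff_exp_le (by norm_num : (0:ℝ) < 3)]
      exact (Real.exp_one_lt_d9).le.trans (by norm_num)
    have h3p : (3:ℝ) ^ p = 3 * (3:ℝ) ^ (p - 1) := by
      have h3p' := Real.rpow_add (show (0:ℝ) < 3 by norm_num) 1 (p - 1)
      rw [show (1:ℝ) + (p - 1) = p by ring, Real.rpow_one] at h3p'
      exact h3p'
    have hexp : (3:ℝ) ^ (p - 1) = Real.exp ((p - 1) * Real.log 3) := by
      rw [Real.rpow_def_of_pos (by norm_num : (0:ℝ) < 3), mul_comm]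
    have h8 : 1 + (p - 1) * Real.log 3 ≤ (3:ℝ) ^ (p - 1) := by
      rw [hexp]
      linarith [Real.add_one_le_exp ((p - 1) * Real.log 3)]
    have h9 : p ≤ (3:ℝ) ^ (p - 1) := by
      have : (p - 1) * 1 ≤ (p - 1) * Real.log 3 :=
        mul_le_mul_of_nonneg_left hlog3 (by linarith)
      linarith
    rw [h3p]; linarith
  have hfact5 : D ≤ 3 := by
    rw [hDdef]
    calc (2 * p + 1) ^ (1/p) ≤ ((3:ℝ) ^ p) ^ (1/p) :=
          Real.rpow_le_rpow (by linarith) hfact3 (by positivity)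
      _ = 3 := by
          rw [← Real.rpow_mul (by norm_num : (0:ℝ) ≤ 3), mul_one_div, div_self (ne_of_gt hp0),
            Real.rpow_one]
  have hfactC : (1 / (2 * p + 1)) ^ (1/p) = D⁻¹ := by
    rw [hDdef, one_div, Real.inv_rpow (by linarith)]
  have hED : E * D ≤ 6 := by nlinarith
  have h1 : E / 24 ≤ D⁻¹ / 4 := by
    rw [div_le_div_iff₀ (by norm_num) (by norm_num), inv_eq_one_div, div_mul_eq_mul_div,
      le_div_iff₀ hD0]
    nlinarith
  have hP : 0 ≤ B * A * (b - a) ^ 2 := by positivity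
  calc M * (b - a) ^ 2 / 24 = E / 24 * (B * A * (b - a) ^ 2) := by
        rw [hMdef, hfact1]; ring
    _ ≤ D⁻¹ / 4 * (B * A * (b - a) ^ 2) := mul_le_mul_of_nonneg_right h1 hP
    _ = (b - a) ^ 2 / 4 * (1 / (2 * p + 1)) ^ (1/p) * (1 / (2 * h (1/2))) ^ (1/q) * A := by
        rw [hfactC, hBdef]; ring
end

section
/- Let h : [0,1] → ℝ be a nonnegative function not identically zero with h(1/2) > 0, let f : I ⊆ ℝ → ℝ be h-convex on I, and let a, b ∈ I° with a < b, with f integrable on [a, b]. Then (2h(1/2)/(b−a)) ∫_a^b f(x) dx − f((a+b)/2) ≥ | (2h(1/2)/(b−a)) ∫_a^b |(f(x) + f(a+b−x))/2| dx − |f((a+b)/2)| | ≥ 0; equivalently, (1/(b−a)) ∫_a^b f(x) dx − (1/(2h(1/2))) f((a+b)/2) ≥ (1/(2h(1/2))) · | (2h(1/2)/(b−a)) ∫_a^b |(f(x) + f(a+b−x))/2| dx − |f((a+b)/2)| |. -/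
open MeasureTheory intervalIntegral

/-- Theorem 15: refinement of the left-hand side of the h-Hermite–Hadamard inequality. -/
theorem stmt_10 (I : Set ℝ) (hI : I.OrdConnected)
    (h : ℝ → ℝ) (hh0 : ∀ t ∈ Set.Icc (0:ℝ) 1, 0 ≤ h t)
    (hh1 : ∃ t ∈ Set.Icc (0:ℝ) 1, h t ≠ 0) (hhalf : 0 < h (1 / 2))
    (f : ℝ → ℝ) (hf0 : ∀ x ∈ I, 0 ≤ f x)
    (hconv : ∀ x ∈ I, ∀ y ∈ I, ∀ t ∈ Set.Ioo (0:ℝ) 1,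
      f (t * x + (1 - t) * y) ≤ h t * f x + h (1 - t) * f y)
    (a b : ℝ) (ha : a ∈ interior I) (hb : b ∈ interior I) (hab : a < b)
    (hint : IntervalIntegrable f volume a b) :
    (((2 * h (1 / 2) / (b - a)) * ∫ x in a..b, f x) - f ((a + b) / 2) ≥
        abs (((2 * h (1 / 2) / (b - a)) * ∫ x in a..b, |(f x + f (a + b - x)) / 2|) -
          |f ((a + b) / 2)|)) ∧
      (abs (((2 * h (1 / 2) / (b - a)) * ∫ x in a..b, |(f x + f (a + b - x)) / 2|) -
          |f ((a + b) / 2)|) ≥ 0) ∧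
      (((1 / (b - a)) * ∫ x in a..b, f x) - (1 / (2 * h (1 / 2))) * f ((a + b) / 2) ≥
        (1 / (2 * h (1 / 2))) *
          abs (((2 * h (1 / 2) / (b - a)) * ∫ x in a..b, |(f x + f (a + b - x)) / 2|) -
            |f ((a + b) / 2)|)) := by
  have haI : a ∈ I := interior_subset ha
  have hbI : b ∈ I := interior_subset hb
  have hsub : Set.Icc a b ⊆ I := hI.out haI hbI
  have hba : 0 < b - a := by linarith
  have hrefl : ∀ x ∈ Set.Icc a b, a + b - x ∈ Set.Icc a b := by
    intro x hx
    exact ⟨by linarith [hx.2], by linarith [hx.1]⟩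
  have hmidI : (a + b) / 2 ∈ I := hsub ⟨by linarith, by linarith⟩
  -- integrability of reflected f
  have hint' : IntervalIntegrable (fun x => f (a + b - x)) volume a b := by
    have := hint.comp_sub_left (a + b)
    simpa using this.symm
  -- reflected integral equals original
  have hreflint : (∫ x in a..b, f (a + b - x)) = ∫ x in a..b, f x := by
    rw [intervalIntegral.integral_comp_sub_left f (a + b)]
    norm_num
  -- pointwise key inequality
  have hkey : ∀ x ∈ Set.Icc a b, f ((a + b) / 2) ≤ h (1/2) * (f x + f (a + b - x)) := by
    intro x hx
    have := hconv x (hsub hx) (a + b - x) (hsub (hrefl x hx)) (1/2)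
      ⟨by norm_num, by norm_num⟩
    have heq : (1/2 : ℝ) * x + (1 - 1/2) * (a + b - x) = (a + b) / 2 := by ring
    rw [heq] at this
    calc f ((a + b) / 2) ≤ h (1/2) * f x + h (1 - 1/2) * f (a + b - x) := this
      _ = h (1/2) * (f x + f (a + b - x)) := by norm_num; ring
  -- integrate
  have hHH : (b - a) * f ((a + b) / 2) ≤ 2 * h (1/2) * ∫ x in a..b, f x := by
    have hmono : (∫ _x in a..b, f ((a + b) / 2)) ≤
        ∫ x in a..b, h (1/2) * (f x + f (a + b - x)) := by
      apply intervalIntegral.integral_mono_on hab.le intervalIntegrable_const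
        (((hint.add hint').const_mul _))
      exact hkey
    rw [intervalIntegral.integral_const] at hmono
    rw [intervalIntegral.integral_const_mul, intervalIntegral.integral_add hint hint',
      hreflint] at hmono
    calc (b - a) * f ((a + b) / 2) = (b - a) • f ((a + b) / 2) := by simp
      _ ≤ h (1/2) * ((∫ x in a..b, f x) + ∫ x in a..b, f x) := hmono
      _ = 2 * h (1/2) * ∫ x in a..b, f x := by ring
  -- nonnegativity of f on [a,b] lets us drop abs in integrand
  have habs : (∫ x in a..b, |(f x + f (a + b - x)) / 2|) = ∫ x in a..b, f x := by
    have : (∫ x in a..b, |(f x + f (a + b - x)) / 2|)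
        = ∫ x in a..b, (f x + f (a + b - x)) / 2 := by
      apply intervalIntegral.integral_congr
      intro x hx
      rw [Set.uIcc_of_le hab.le] at hx
      have h1 : 0 ≤ f x := hf0 x (hsub hx)
      have h2 : 0 ≤ f (a + b - x) := hf0 _ (hsub (hrefl x hx))
      exact abs_of_nonneg (by linarith)
    rw [this]
    have : (fun x => (f x + f (a + b - x)) / 2) = fun x => (2:ℝ)⁻¹ * (f x + f (a + b - x)) := by
      funext x; ring
    rw [this, intervalIntegral.integral_const_mul, intervalIntegral.integral_add hint hint',
      hreflint]
    ring
  have hmidabs : |f ((a + b) / 2)| = f ((a + b) / 2) := abs_of_nonneg (hf0 _ hmidI)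
  set A := ((2 * h (1 / 2) / (b - a)) * ∫ x in a..b, f x) - f ((a + b) / 2) with hA
  have hA0 : 0 ≤ A := by
    rw [hA]
    rw [sub_nonneg, div_mul_eq_mul_div, le_div_iff₀ hba]
    linarith [hHH]
  have habsA : abs (((2 * h (1 / 2) / (b - a)) * ∫ x in a..b, |(f x + f (a + b - x)) / 2|) -
      |f ((a + b) / 2)|) = A := by
    rw [habs, hmidabs, ← hA, abs_of_nonneg hA0]
  refine ⟨by rw [habsA], by rw [habsA]; exact hA0, ?_⟩
  rw [habsA]
  have hhpos : (0:ℝ) < 2 * h (1/2) := by linarith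
  have key : (1 / (b - a)) * ∫ x in a..b, f x =
      (1 / (2 * h (1/2))) * ((2 * h (1/2) / (b - a)) * ∫ x in a..b, f x) := by
    field_simp
  rw [key, ← mul_sub]
end

section
/- Let h : [0,1] → ℝ be a nonnegative function not identically zero and integrable on [0,1], let f : I ⊂ ℝ → ℝ be h-convex on I, and let a, b ∈ I with a < b, with f integrable on [a, b]. Then f(a) ∫_0^1 h(t) dt + f(b) ∫_0^1 h(1−t) dt − (1/(b−a)) ∫_a^b f(x) dx ≥ | ∫_0^1 |h(t) f(a) + h(1−t) f(b)| dt − (1/(b−a)) ∫_a^b |f(x)| dx | ≥ 0. -/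
open MeasureTheory intervalIntegral

/-- Theorem 16: refinement of the right-hand side of the h-Hermite–Hadamard inequality. -/
theorem stmt_11 (I : Set ℝ) (hI : I.OrdConnected)
    (h : ℝ → ℝ) (hh0 : ∀ t ∈ Set.Icc (0:ℝ) 1, 0 ≤ h t)
    (hh1 : ∃ t ∈ Set.Icc (0:ℝ) 1, h t ≠ 0)
    (hhint : IntervalIntegrable h volume 0 1)
    (f : ℝ → ℝ) (hf0 : ∀ x ∈ I, 0 ≤ f x)
    (hconv : ∀ x ∈ I, ∀ y ∈ I, ∀ t ∈ Set.Ioo (0:ℝ) 1,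
      f (t * x + (1 - t) * y) ≤ h t * f x + h (1 - t) * f y)
    (a b : ℝ) (ha : a ∈ I) (hb : b ∈ I) (hab : a < b)
    (hint : IntervalIntegrable f volume a b) :
    ((f a * ∫ t in (0:ℝ)..1, h t) + (f b * ∫ t in (0:ℝ)..1, h (1 - t)) -
        (1 / (b - a)) * ∫ x in a..b, f x ≥
      abs ((∫ t in (0:ℝ)..1, |h t * f a + h (1 - t) * f b|) -
        (1 / (b - a)) * ∫ x in a..b, |f x|)) ∧
    (abs ((∫ t in (0:ℝ)..1, |h t * f a + h (1 - t) * f b|) -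
        (1 / (b - a)) * ∫ x in a..b, |f x|) ≥ 0) := by
  have hab' : a ≤ b := hab.le
  have hba : (0:ℝ) < b - a := by linarith
  have hIcc : Set.Icc a b ⊆ I := hI.out ha hb
  have hfa : 0 ≤ f a := hf0 a ha
  have hfb : 0 ≤ f b := hf0 b hb
  have hint1 : IntervalIntegrable (fun t => h (1 - t)) volume 0 1 := by
    have := (hhint.comp_sub_left 1).symm
    simpa using this
  have eq1 : (∫ t in (0:ℝ)..1, h (1 - t)) = ∫ t in (0:ℝ)..1, h t := by
    simpa using intervalIntegral.integral_comp_sub_left h 1 (a := 0) (b := 1)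
  have eq2 : (∫ t in (0:ℝ)..1, |h t * f a + h (1 - t) * f b|)
      = f a * (∫ t in (0:ℝ)..1, h t) + f b * ∫ t in (0:ℝ)..1, h (1 - t) := by
    have hcong : (∫ t in (0:ℝ)..1, |h t * f a + h (1 - t) * f b|)
        = ∫ t in (0:ℝ)..1, (h t * f a + h (1 - t) * f b) := by
      apply intervalIntegral.integral_congr
      intro t ht
      rw [Set.uIcc_of_le (by norm_num : (0:ℝ) ≤ 1)] at ht
      have h1 : (1 - t) ∈ Set.Icc (0:ℝ) 1 := ⟨by linarith [ht.2], by linarith [ht.1]⟩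
      have := hh0 t ht
      have := hh0 (1 - t) h1
      exact abs_of_nonneg (by positivity)
    rw [hcong, intervalIntegral.integral_add (hhint.mul_const _) (hint1.mul_const _),
      intervalIntegral.integral_mul_const, intervalIntegral.integral_mul_const]
    ring
  have eq3 : (∫ x in a..b, |f x|) = ∫ x in a..b, f x := by
    apply intervalIntegral.integral_congr
    intro x hx
    rw [Set.uIcc_of_le hab'] at hx
    exact abs_of_nonneg (hf0 x (hIcc hx))
  -- integrability of t ↦ f ((b-a) * t + a) on [0,1]
  have hint2 : IntervalIntegrable (fun t => f ((b - a) * t + a)) volume 0 1 := by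
    have h1 : IntervalIntegrable (fun x => f (x + a)) volume 0 (b - a) := by
      have := hint.comp_add_right a
      simpa using this
    have h2 := h1.comp_mul_left (c := b - a)
    simp only [zero_div, div_self hba.ne'] at h2
    simpa [mul_comm] using h2
  -- change of variables
  have eqcv : (∫ t in (0:ℝ)..1, f ((b - a) * t + a)) = (b - a)⁻¹ * ∫ x in a..b, f x := by
    rw [intervalIntegral.integral_comp_mul_add f hba.ne' a]
    norm_num [smul_eq_mul]
  -- Hermite–Hadamard right inequality
  have hHH : (1 / (b - a)) * ∫ x in a..b, f x ≤
      f a * (∫ t in (0:ℝ)..1, h t) + f b * ∫ t in (0:ℝ)..1, h (1 - t) := by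
    have hmono : (∫ t in (0:ℝ)..1, f ((b - a) * t + a)) ≤
        ∫ t in (0:ℝ)..1, (h t * f b + h (1 - t) * f a) := by
      apply intervalIntegral.integral_mono_ae_restrict zero_le_one hint2
        ((hhint.mul_const _).add (hint1.mul_const _))
      rw [← Measure.restrict_congr_set Ioo_ae_eq_Icc]
      filter_upwards [ae_restrict_mem measurableSet_Ioo] with t ht
      have hmem : t * b + (1 - t) * a ∈ I := by
        apply hIcc
        constructor
        · nlinarith [ht.1, ht.2]
        · nlinarith [ht.1, ht.2]
      have := hconv b hb a ha t ht
      have harg : (b - a) * t + a = t * b + (1 - t) * a := by ring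
      rw [harg]
      exact this
    have hsum : (∫ t in (0:ℝ)..1, (h t * f b + h (1 - t) * f a))
        = f b * (∫ t in (0:ℝ)..1, h t) + f a * ∫ t in (0:ℝ)..1, h (1 - t) := by
      rw [intervalIntegral.integral_add (hhint.mul_const _) (hint1.mul_const _),
        intervalIntegral.integral_mul_const, intervalIntegral.integral_mul_const]
      ring
    rw [eqcv] at hmono
    rw [hsum, eq1] at hmono
    rw [eq1]
    rw [one_div]
    linarith
  constructor
  · rw [eq2, eq3]
    rw [abs_of_nonneg (by linarith)]
  · exact abs_nonneg _
end

section
/- Let h : [0,1] → ℝ be a nonnegative function not identically zero with h(1/2) > 0 and h integrable on [0,1], let a, b ∈ I with a < b, and let f : I → ℝ be h-convex on I and integrable on [a, b]. Then (1/(2h(1/2))) f((a+b)/2) ≤ (1/(b−a)) ∫_a^b f(x) dx ≤ (f(a) + f(b)) ∫_0^1 h(t) dt. -/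
open MeasureTheory intervalIntegral

open MeasureTheory in
private lemma ae_mem_Ioo_restrict_Icc (a b : ℝ) :
    ∀ᵐ x ∂(volume.restrict (Set.Icc a b)), x ∈ Set.Ioo a b := by
  have h1 : ∀ᵐ x ∂(volume.restrict (Set.Icc a b)), x ∈ Set.Icc a b :=
    ae_restrict_mem measurableSet_Icc
  have hne : ∀ c : ℝ, ∀ᵐ x : ℝ ∂volume, x ≠ c := by
    intro c
    refine ae_iff.mpr ?_
    have : {x : ℝ | ¬x ≠ c} = {c} := by ext x; simp [not_ne_iff]
    rw [this, Real.volume_singleton]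
  have h2 := (hne a).filter_mono (ae_mono (Measure.restrict_le_self (s := Set.Icc a b)))
  have h3 := (hne b).filter_mono (ae_mono (Measure.restrict_le_self (s := Set.Icc a b)))
  filter_upwards [h1, h2, h3] with x hx hxa hxb
  exact ⟨lt_of_le_of_ne hx.1 (Ne.symm hxa), lt_of_le_of_ne hx.2 hxb⟩

/-- Theorem 5 (Sarikaya et al.): Hermite–Hadamard inequality for h-convex functions. -/
theorem stmt_12 (I : Set ℝ) (hI : I.OrdConnected)
    (h : ℝ → ℝ) (hh0 : ∀ t ∈ Set.Icc (0:ℝ) 1, 0 ≤ h t)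
    (hh1 : ∃ t ∈ Set.Icc (0:ℝ) 1, h t ≠ 0) (hhalf : 0 < h (1 / 2))
    (hhint : IntervalIntegrable h volume 0 1)
    (a b : ℝ) (ha : a ∈ I) (hb : b ∈ I) (hab : a < b)
    (f : ℝ → ℝ) (hf0 : ∀ x ∈ I, 0 ≤ f x)
    (hconv : ∀ x ∈ I, ∀ y ∈ I, ∀ t ∈ Set.Ioo (0:ℝ) 1,
      f (t * x + (1 - t) * y) ≤ h t * f x + h (1 - t) * f y)
    (hint : IntervalIntegrable f volume a b) :
    (1 / (2 * h (1 / 2))) * f ((a + b) / 2) ≤ (1 / (b - a)) * ∫ x in a..b, f x ∧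
      (1 / (b - a)) * ∫ x in a..b, f x ≤ (f a + f b) * ∫ t in (0:ℝ)..1, h t := by
  have hba : (0:ℝ) < b - a := sub_pos.mpr hab
  have hIcc : Set.Icc a b ⊆ I := hI.out ha hb
  -- integrability of the affine composition t ↦ f ((a-b)*t + b) on [0,1]
  have hab' : a - b ≠ 0 := sub_ne_zero.mpr hab.ne
  have hint1 : IntervalIntegrable (fun t => f ((a - b) * t + b)) volume 0 1 := by
    have h1 : IntervalIntegrable (fun x => f (x + b)) volume (a - b) (b - b) :=
      hint.comp_add_right b
    have h2 := h1.comp_mul_left (c := a - b)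
    simp only [sub_self] at h2
    have h2' : IntervalIntegrable (fun x => f ((a - b) * x + b)) volume
        ((a - b) / (a - b)) (0 / (a - b)) := h2
    rw [div_self hab', zero_div] at h2'
    exact h2'.symm
  -- key change of variables
  have key : (∫ t in (0:ℝ)..1, f ((a - b) * t + b)) = (1 / (b - a)) * ∫ x in a..b, f x := by
    rw [intervalIntegral.integral_comp_mul_add f hab' b]
    simp only [mul_zero, zero_add, mul_one, sub_add_cancel, smul_eq_mul]
    rw [intervalIntegral.integral_symm a b]
    field_simp
    ring
  constructor
  · -- left inequality
    have hmid : (a + b) / 2 ∈ I := hIcc ⟨by linarith, by linarith⟩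
    have hintr : IntervalIntegrable (fun x => f (a + b - x)) volume a b := by
      have := hint.comp_sub_left (a + b)
      simp only [add_sub_cancel_right, add_sub_cancel_left] at this
      exact this.symm
    have hrhsint : IntervalIntegrable
        (fun x => h (1/2) * f x + h (1/2) * f (a + b - x)) volume a b :=
      (hint.const_mul _).add (hintr.const_mul _)
    have hptwise : ∀ x ∈ Set.Ioo a b,
        f ((a + b) / 2) ≤ h (1/2) * f x + h (1/2) * f (a + b - x) := by
      intro x hx
      have hxI : x ∈ I := hIcc ⟨hx.1.le, hx.2.le⟩
      have hyI : a + b - x ∈ I := hIcc ⟨by linarith [hx.2], by linarith [hx.1]⟩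
      have := hconv x hxI (a + b - x) hyI (1/2) ⟨by norm_num, by norm_num⟩
      have heq : (1/2 : ℝ) * x + (1 - 1/2) * (a + b - x) = (a + b) / 2 := by ring
      rw [heq] at this
      have : f ((a+b)/2) ≤ h (1/2) * f x + h (1 - 1/2) * f (a + b - x) := this
      norm_num at this ⊢
      linarith
    have hae : (fun _ : ℝ => f ((a + b) / 2)) ≤ᵐ[volume.restrict (Set.Icc a b)]
        (fun x => h (1/2) * f x + h (1/2) * f (a + b - x)) := by
      have h0 := ae_mem_Ioo_restrict_Icc a b
      filter_upwards [h0] with x hx using hptwise x hx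
    have hmono := intervalIntegral.integral_mono_ae_restrict hab.le
      (intervalIntegrable_const) hrhsint hae
    rw [intervalIntegral.integral_const] at hmono
    have hsum : (∫ x in a..b, (h (1/2) * f x + h (1/2) * f (a + b - x)))
        = 2 * h (1/2) * ∫ x in a..b, f x := by
      rw [intervalIntegral.integral_add (hint.const_mul _) (hintr.const_mul _),
        intervalIntegral.integral_const_mul, intervalIntegral.integral_const_mul,
        intervalIntegral.integral_comp_sub_left f (a + b)]
      simp only [add_sub_cancel_right, add_sub_cancel_left]
      ring
    rw [hsum] at hmono
    have hmono' : (b - a) * f ((a + b) / 2) ≤ 2 * h (1/2) * ∫ x in a..b, f x := by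
      simpa [smul_eq_mul] using hmono
    rw [div_mul_eq_mul_div, div_mul_eq_mul_div, one_mul, one_mul, div_le_div_iff₀ (by linarith) hba]
    linarith [hmono']
  · -- right inequality
    have hptwise : ∀ t ∈ Set.Ioo (0:ℝ) 1,
        f ((a - b) * t + b) ≤ h t * f a + h (1 - t) * f b := by
      intro t ht
      have := hconv a ha b hb t ht
      have heq : t * a + (1 - t) * b = (a - b) * t + b := by ring
      rw [heq] at this
      exact this
    have hrint1 : IntervalIntegrable (fun t => h t * f a) volume 0 1 := hhint.mul_const _
    have hrint2 : IntervalIntegrable (fun t => h (1 - t) * f b) volume 0 1 := by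
      have := hhint.comp_sub_left 1
      simp only [sub_zero, sub_self] at this
      exact (this.symm).mul_const _
    have hae : (fun t => f ((a - b) * t + b)) ≤ᵐ[volume.restrict (Set.Icc (0:ℝ) 1)]
        (fun t => h t * f a + h (1 - t) * f b) := by
      have h0 := ae_mem_Ioo_restrict_Icc (0:ℝ) 1
      filter_upwards [h0] with t ht using hptwise t ht
    have hmono := intervalIntegral.integral_mono_ae_restrict (by norm_num : (0:ℝ) ≤ 1)
      hint1 (hrint1.add hrint2) hae
    rw [key] at hmono
    have hsum : (∫ t in (0:ℝ)..1, (h t * f a + h (1 - t) * f b))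
        = (f a + f b) * ∫ t in (0:ℝ)..1, h t := by
      rw [intervalIntegral.integral_add hrint1 hrint2,
        intervalIntegral.integral_mul_const, intervalIntegral.integral_mul_const,
        intervalIntegral.integral_comp_sub_left h 1]
      simp only [sub_zero, sub_self]
      ring
    rw [hsum] at hmono
    exact hmono
end

section
/- Let 0 < a < b and let q > 1 with p = q/(q−1). Then |L(a, b) − A(a, b)| ≤ ((ln b − ln a)²/16) · B(1/2, p+1)^{1/p} · A( (a^q + G(a,b)^q)^{1/q}, (b^q + G(a,b)^q)^{1/q} ), where A(x, y) = (x+y)/2 is the arithmetic mean, G(x, y) = √(xy) is the geometric mean, and L(a, b) = (b−a)/(ln b − ln a) is the logarithmic mean. (This is obtained by applying the h-convex trapezoid inequality with exponent q to f(x) = e^x on [ln a, ln b] with h(t) = t.) -/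
open MeasureTheory intervalIntegral

section Aux

/-- Trapezoid identity for the exponential function. -/
lemma stmt13_trap_id (x0 c : ℝ) (hc : 0 < c) :
    ∫ s in (0:ℝ)..1, s * (1 - s) * Real.exp (x0 + s * c) =
      (Real.exp (x0 + c) + Real.exp x0) / c ^ 2
        - 2 * (Real.exp (x0 + c) - Real.exp x0) / c ^ 3 := by
  have hc' : c ≠ 0 := hc.ne'
  have key : ∀ s : ℝ, HasDerivAt
      (fun s : ℝ => Real.exp (x0 + s * c) * (s * (1 - s) / c - (1 - 2 * s) / c ^ 2 - 2 / c ^ 3))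
      (s * (1 - s) * Real.exp (x0 + s * c)) s := by
    intro s
    have h1 : HasDerivAt (fun s : ℝ => Real.exp (x0 + s * c)) (Real.exp (x0 + s * c) * c) s := by
      have : HasDerivAt (fun s : ℝ => x0 + s * c) c s := by
        simpa using ((hasDerivAt_id s).mul_const c).const_add x0
      simpa using this.exp
    have h2 : HasDerivAt (fun s : ℝ => s * (1 - s) / c - (1 - 2 * s) / c ^ 2 - 2 / c ^ 3)
        ((1 - 2 * s) / c + 2 / c ^ 2) s := by
      have ha : HasDerivAt (fun s : ℝ => s * (1 - s)) (1 - 2 * s) s := by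
        have := (hasDerivAt_id s).mul ((hasDerivAt_id s).const_sub 1)
        exact this.congr_deriv (by simp only [id]; ring)
      have hb := (ha.div_const c).sub
        ((((hasDerivAt_id s).const_mul 2).const_sub 1).div_const (c ^ 2))
      have := hb.sub_const (2 / c ^ 3)
      exact this.congr_deriv (by ring)
    have := h1.mul h2
    exact this.congr_deriv (by field_simp; ring)
  rw [intervalIntegral.integral_eq_sub_of_hasDerivAt (fun s _ => key s)
    (by
      apply Continuous.intervalIntegrable
      continuity)]
  field_simp
  ring

/-- substitution t = u^2 in the Beta-type integral -/
lemma stmt13_beta_sub (p : ℝ) :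
    (∫ t in (0:ℝ)..1, t ^ (-(1:ℝ)/2) * (1-t) ^ p) = ∫ u in (0:ℝ)..1, 2 * (1-u^2) ^ p := by
  have hinj : Set.InjOn (fun u : ℝ => u ^ 2) (Set.Ioo 0 1) := by
    intro x hx y hy h
    have h0 : (x - y) * (x + y) = 0 := by dsimp at h; linear_combination h
    rcases mul_eq_zero.mp h0 with h1 | h1
    · linarith
    · exfalso; have := hx.1; have := hy.1; linarith
  have himg : (fun u : ℝ => u ^ 2) '' Set.Ioo 0 1 = Set.Ioo 0 1 := by
    ext t
    constructor
    · rintro ⟨u, hu, rfl⟩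
      obtain ⟨h1, h2⟩ := hu
      dsimp only
      exact ⟨by nlinarith, by nlinarith⟩
    · rintro ht
      exact ⟨Real.sqrt t, ⟨Real.sqrt_pos.2 ht.1, by
        rw [show (1:ℝ) = Real.sqrt 1 by simp]
        exact Real.sqrt_lt_sqrt ht.1.le ht.2⟩, Real.sq_sqrt ht.1.le⟩
  have key := integral_image_eq_integral_abs_deriv_smul (f := fun u : ℝ => u ^ 2)
      (f' := fun u : ℝ => 2 * u) measurableSet_Ioo
      (fun x _ => by simpa using (hasDerivAt_pow 2 x).hasDerivWithinAt) hinj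
      (fun t => t ^ (-(1:ℝ)/2) * (1-t) ^ p)
  rw [himg] at key
  rw [intervalIntegral.integral_of_le (by norm_num : (0:ℝ) ≤ 1),
    intervalIntegral.integral_of_le (by norm_num : (0:ℝ) ≤ 1),
    integral_Ioc_eq_integral_Ioo, integral_Ioc_eq_integral_Ioo, key]
  apply setIntegral_congr_fun measurableSet_Ioo
  intro u hu
  have hu0 : (0:ℝ) < u := hu.1
  have : ((u:ℝ) ^ 2) ^ (-(1:ℝ)/2) = u⁻¹ := by
    rw [← Real.rpow_natCast u 2, ← Real.rpow_mul hu0.le]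
    norm_num [Real.rpow_neg_one]
  simp only [smul_eq_mul, this]
  rw [abs_of_pos (by positivity)]
  field_simp

lemma stmt13_kernel_left (p : ℝ) :
    ∫ s in (0:ℝ)..(1/2:ℝ), (s*(1-s)) ^ p
      = (1/2:ℝ) * ∫ u in (0:ℝ)..1, ((1-u^2)/4) ^ p := by
  have h := intervalIntegral.integral_comp_mul_add (a := (0:ℝ)) (b := 1)
      (f := fun s : ℝ => (s*(1-s)) ^ p) (c := (-1/2:ℝ)) (by norm_num) (1/2:ℝ)
  norm_num at h
  rw [intervalIntegral.integral_symm 0 (1/2), mul_neg, neg_neg] at h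
  have h4 : (∫ x in (0:ℝ)..1, ((-(1/2*x) + 1/2) * (1 - (-(1/2*x) + 1/2))) ^ p)
      = ∫ u in (0:ℝ)..1, ((1-u^2)/4) ^ p :=
    intervalIntegral.integral_congr (fun u _ => by congr 1; ring)
  rw [h4] at h
  linarith

lemma stmt13_kernel_right (p : ℝ) :
    ∫ s in (1/2:ℝ)..1, (s*(1-s)) ^ p = ∫ s in (0:ℝ)..(1/2:ℝ), (s*(1-s)) ^ p := by
  have h := intervalIntegral.integral_comp_sub_left (a := (1/2:ℝ)) (b := 1)
      (fun s : ℝ => (s*(1-s)) ^ p) 1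
  norm_num at h
  rw [← h]
  exact intervalIntegral.integral_congr (fun s _ => by congr 1; ring)

/-- Hölder inequality specialised to our setting. -/
lemma stmt13_holder_half (p q x0 c : ℝ) (hpq : Real.HolderConjugate p q) {α β : ℝ}
    (hαβ : α ≤ β) (hα : 0 ≤ α) (hβ : β ≤ 1) :
    ∫ s in α..β, s * (1 - s) * Real.exp (x0 + s * c)
      ≤ (∫ s in α..β, (s * (1 - s)) ^ p) ^ (1/p)
        * (∫ s in α..β, Real.exp (x0 + s * c) ^ q) ^ (1/q) := by
  set μ := volume.restrict (Set.Ioc α β) with hμ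
  have haemem : ∀ᵐ s ∂μ, s ∈ Set.Ioc α β :=
    ae_restrict_mem measurableSet_Ioc
  have hf_nonneg : 0 ≤ᵐ[μ] fun s : ℝ => s * (1 - s) := by
    filter_upwards [haemem] with s hs
    have h1 : 0 < s := lt_of_le_of_lt hα hs.1
    have h2 : s ≤ 1 := le_trans hs.2 hβ
    exact mul_nonneg h1.le (by linarith)
  have hg_nonneg : 0 ≤ᵐ[μ] fun s : ℝ => Real.exp (x0 + s * c) := by
    filter_upwards with s using (Real.exp_pos _).le
  have hfm : AEStronglyMeasurable (fun s : ℝ => s * (1 - s)) μ :=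
    (by continuity : Continuous fun s : ℝ => s * (1 - s)).aestronglyMeasurable
  have hgm : AEStronglyMeasurable (fun s : ℝ => Real.exp (x0 + s * c)) μ :=
    (by continuity : Continuous fun s : ℝ => Real.exp (x0 + s * c)).aestronglyMeasurable
  have hf : MemLp (fun s : ℝ => s * (1 - s)) (ENNReal.ofReal p) μ := by
    refine MemLp.mono_exponent (q := ⊤) ?_ le_top
    refine memLp_top_of_bound hfm 1 ?_
    filter_upwards [haemem] with s hs
    have h1 : 0 < s := lt_of_le_of_lt hα hs.1
    have h2 : s ≤ 1 := le_trans hs.2 hβ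
    rw [Real.norm_eq_abs, abs_of_nonneg (mul_nonneg h1.le (by linarith))]
    nlinarith
  have hg : MemLp (fun s : ℝ => Real.exp (x0 + s * c)) (ENNReal.ofReal q) μ := by
    refine MemLp.mono_exponent (q := ⊤) ?_ le_top
    refine memLp_top_of_bound hgm (Real.exp (|x0| + |c|)) ?_
    filter_upwards [haemem] with s hs
    have h1 : 0 < s := lt_of_le_of_lt hα hs.1
    have h2 : s ≤ 1 := le_trans hs.2 hβ
    rw [Real.norm_eq_abs, abs_of_pos (Real.exp_pos _)]
    apply Real.exp_le_exp.2
    have : s * c ≤ |c| := by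
      calc s * c ≤ |s * c| := le_abs_self _
        _ = s * |c| := by rw [abs_mul, abs_of_pos h1]
        _ ≤ 1 * |c| := by apply mul_le_mul_of_nonneg_right h2 (abs_nonneg c)
        _ = |c| := one_mul _
    linarith [le_abs_self x0]
  have key := integral_mul_le_Lp_mul_Lq_of_nonneg (μ := μ) hpq hf_nonneg hg_nonneg hf hg
  rw [intervalIntegral.integral_of_le hαβ, intervalIntegral.integral_of_le hαβ,
    intervalIntegral.integral_of_le hαβ]
  exact key

lemma stmt13_exp_bound_left (x0 c q : ℝ) :
    ∫ s in (0:ℝ)..(1/2:ℝ), Real.exp (q * (x0 + s * c))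
      ≤ (Real.exp (q * x0) + Real.exp (q * (x0 + c / 2))) / 4 := by
  set X := Real.exp (q * x0)
  set Y := Real.exp (q * (x0 + c / 2))
  have hle : ∫ s in (0:ℝ)..(1/2:ℝ), Real.exp (q * (x0 + s * c))
      ≤ ∫ s in (0:ℝ)..(1/2:ℝ), ((1 - 2*s) * X + 2*s * Y) := by
    apply intervalIntegral.integral_mono_on (by norm_num)
    · exact (Continuous.intervalIntegrable (by continuity) _ _)
    · exact (Continuous.intervalIntegrable (by continuity) _ _)
    · intro s hs
      obtain ⟨hs0, hs1⟩ := hs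
      have := convexOn_exp.2 (Set.mem_univ (q * x0)) (Set.mem_univ (q * (x0 + c / 2)))
        (by linarith : (0:ℝ) ≤ 1 - 2*s) (by linarith : (0:ℝ) ≤ 2*s) (by ring)
      simp only [smul_eq_mul] at this
      calc Real.exp (q * (x0 + s * c))
          = Real.exp ((1 - 2*s) * (q * x0) + 2*s * (q * (x0 + c / 2))) := by congr 1; ring
        _ ≤ (1 - 2*s) * X + 2*s * Y := this
  have hcomp : ∫ s in (0:ℝ)..(1/2:ℝ), ((1 - 2*s) * X + 2*s * Y) = (X + Y) / 4 := by
    have : (fun s : ℝ => (1 - 2*s) * X + 2*s * Y) = fun s => (2*Y - 2*X) * s + X := by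
      funext s; ring
    rw [this, intervalIntegral.integral_add (Continuous.intervalIntegrable (by continuity) _ _)
      (intervalIntegrable_const), intervalIntegral.integral_const_mul,
      integral_id, intervalIntegral.integral_const]
    norm_num; ring
  linarith

lemma stmt13_exp_bound_right (x0 c q : ℝ) :
    ∫ s in (1/2:ℝ)..1, Real.exp (q * (x0 + s * c))
      ≤ (Real.exp (q * (x0 + c / 2)) + Real.exp (q * (x0 + c))) / 4 := by
  set X := Real.exp (q * (x0 + c / 2))
  set Y := Real.exp (q * (x0 + c))
  have hle : ∫ s in (1/2:ℝ)..1, Real.exp (q * (x0 + s * c))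
      ≤ ∫ s in (1/2:ℝ)..1, ((2 - 2*s) * X + (2*s - 1) * Y) := by
    apply intervalIntegral.integral_mono_on (by norm_num)
    · exact (Continuous.intervalIntegrable (by continuity) _ _)
    · exact (Continuous.intervalIntegrable (by continuity) _ _)
    · intro s hs
      obtain ⟨hs0, hs1⟩ := hs
      have := convexOn_exp.2 (Set.mem_univ (q * (x0 + c / 2))) (Set.mem_univ (q * (x0 + c)))
        (by linarith : (0:ℝ) ≤ 2 - 2*s) (by linarith : (0:ℝ) ≤ 2*s - 1) (by ring)
      simp only [smul_eq_mul] at this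
      calc Real.exp (q * (x0 + s * c))
          = Real.exp ((2 - 2*s) * (q * (x0 + c / 2)) + (2*s - 1) * (q * (x0 + c))) := by
            congr 1; ring
        _ ≤ (2 - 2*s) * X + (2*s - 1) * Y := this
  have hcomp : ∫ s in (1/2:ℝ)..1, ((2 - 2*s) * X + (2*s - 1) * Y) = (X + Y) / 4 := by
    have : (fun s : ℝ => (2 - 2*s) * X + (2*s - 1) * Y) = fun s => (2*Y - 2*X) * s + (2*X - Y) := by
      funext s; ring
    rw [this, intervalIntegral.integral_add (Continuous.intervalIntegrable (by continuity) _ _)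
      (intervalIntegrable_const), intervalIntegral.integral_const_mul,
      integral_id, intervalIntegral.integral_const]
    norm_num; ring
  linarith

end Aux

set_option maxHeartbeats 1000000 in
/-- Proposition 1: an inequality between the logarithmic and arithmetic means. -/
theorem stmt_13 (a b q p : ℝ) (ha : 0 < a) (hab : a < b)
    (hq : 1 < q) (hp : p = q / (q - 1)) :
    |(b - a) / (Real.log b - Real.log a) - (a + b) / 2| ≤
      (Real.log b - Real.log a) ^ 2 / 16 *
        (∫ t in (0:ℝ)..1, t ^ ((1:ℝ) / 2 - 1) * (1 - t) ^ (p + 1 - 1)) ^ (1 / p) *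
        (((a ^ q + Real.sqrt (a * b) ^ q) ^ (1 / q) +
          (b ^ q + Real.sqrt (a * b) ^ q) ^ (1 / q)) / 2) := by
  have hb : 0 < b := ha.trans hab
  have hpq : q.HolderConjugate p := (Real.holderConjugate_iff_eq_conjExponent hq).2 hp
  have hpq' : p.HolderConjugate q := hpq.symm
  have hp1 : 1 < p := hpq'.lt
  have hp0 : 0 < p := hpq'.pos
  have hq0 : 0 < q := hpq.pos
  set x0 := Real.log a with hx0
  set x1 := Real.log b with hx1
  set c := x1 - x0 with hcdef
  have hc : 0 < c := sub_pos.2 (Real.log_lt_log ha hab)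
  set G := Real.sqrt (a * b) with hGdef
  have hG : 0 < G := Real.sqrt_pos.2 (by positivity)
  have hlogG : Real.log G = x0 + c / 2 := by
    rw [hGdef, Real.log_sqrt (by positivity), Real.log_mul ha.ne' hb.ne']
    rw [hcdef, hx0, hx1]; ring
  -- the three exponential identifications
  have ea : Real.exp (q * x0) = a ^ q := by
    rw [Real.rpow_def_of_pos ha]; congr 1; rw [hx0]; ring
  have eg : Real.exp (q * (x0 + c / 2)) = G ^ q := by
    rw [Real.rpow_def_of_pos hG, hlogG]; congr 1; ring
  have eb : Real.exp (q * (x0 + c)) = b ^ q := by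
    rw [Real.rpow_def_of_pos hb]; congr 1; rw [hcdef, hx1]; ring
  have eexpa : Real.exp x0 = a := Real.exp_log ha
  have eexpb : Real.exp (x0 + c) = b := by
    rw [show x0 + c = x1 by rw [hcdef]; ring, hx1]; exact Real.exp_log hb
  -- the Beta-type integral
  set B := ∫ t in (0:ℝ)..1, t ^ ((1:ℝ) / 2 - 1) * (1 - t) ^ (p + 1 - 1) with hBdef
  set J := ∫ u in (0:ℝ)..1, (1 - u ^ 2) ^ p with hJdef
  have hJ0 : 0 ≤ J := by
    rw [hJdef]
    apply intervalIntegral.integral_nonneg (by norm_num)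
    intro u hu
    exact Real.rpow_nonneg (by nlinarith [hu.1, hu.2]) p
  have hBJ : B = 2 * J := by
    rw [hBdef, show (1:ℝ) / 2 - 1 = -(1:ℝ)/2 by norm_num, show p + 1 - 1 = p by ring,
      stmt13_beta_sub p, hJdef, ← intervalIntegral.integral_const_mul]
  have hB0 : 0 ≤ B := by rw [hBJ]; linarith
  -- kernel integrals
  set K := ∫ s in (0:ℝ)..(1/2:ℝ), (s * (1 - s)) ^ p with hKdef
  have hKval : K = (1/4:ℝ) ^ (p + 1) * B := by
    have h1 : (∫ u in (0:ℝ)..1, ((1 - u ^ 2)/4) ^ p) = (1/4:ℝ) ^ p * J := by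
      rw [hJdef, ← intervalIntegral.integral_const_mul]
      apply intervalIntegral.integral_congr
      intro u hu
      rw [Set.uIcc_of_le (by norm_num : (0:ℝ) ≤ 1)] at hu
      have h1u : (0:ℝ) ≤ 1 - u ^ 2 := by nlinarith [hu.1, hu.2]
      show ((1 - u ^ 2)/4) ^ p = (1/4:ℝ) ^ p * (1 - u ^ 2) ^ p
      rw [show (1 - u ^ 2)/4 = (1/4) * (1 - u ^ 2) by ring,
        Real.mul_rpow (by norm_num) h1u]
    rw [hKdef, stmt13_kernel_left, h1, hBJ,
      Real.rpow_add (by norm_num : (0:ℝ) < 1/4), Real.rpow_one]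
    ring
  have hK0 : 0 ≤ K := by
    rw [hKdef]
    apply intervalIntegral.integral_nonneg (by norm_num)
    intro s hs
    exact Real.rpow_nonneg (mul_nonneg hs.1 (by linarith [hs.2])) p
  -- the main integral and its two halves
  set I₁ := ∫ s in (0:ℝ)..(1/2:ℝ), s * (1 - s) * Real.exp (x0 + s * c) with hI1def
  set I₂ := ∫ s in (1/2:ℝ)..1, s * (1 - s) * Real.exp (x0 + s * c) with hI2def
  have hcont : Continuous fun s : ℝ => s * (1 - s) * Real.exp (x0 + s * c) := by continuity
  have hsplit : (∫ s in (0:ℝ)..1, s * (1 - s) * Real.exp (x0 + s * c)) = I₁ + I₂ := by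
    rw [hI1def, hI2def]
    exact (intervalIntegral.integral_add_adjacent_intervals
      (hcont.intervalIntegrable _ _) (hcont.intervalIntegrable _ _)).symm
  have hIval : I₁ + I₂ = (b + a) / c ^ 2 - 2 * (b - a) / c ^ 3 := by
    rw [← hsplit, stmt13_trap_id x0 c hc, eexpa, eexpb]
  have hI10 : 0 ≤ I₁ := by
    apply intervalIntegral.integral_nonneg (by norm_num)
    intro s hs
    exact mul_nonneg (mul_nonneg (by linarith [hs.1]) (by linarith [hs.2]))
      (Real.exp_pos _).le
  have hI20 : 0 ≤ I₂ := by
    apply intervalIntegral.integral_nonneg (by norm_num)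
    intro s hs
    exact mul_nonneg (mul_nonneg (by linarith [hs.1]) (by linarith [hs.2]))
      (Real.exp_pos _).le
  -- |L - A| = A - L
  have hALnonneg : 0 ≤ (a + b) / 2 - (b - a) / c := by
    have : (a + b) / 2 - (b - a) / c = c ^ 2 / 2 * (I₁ + I₂) := by
      rw [hIval]; field_simp; ring
    rw [this]
    positivity
  have habs : |(b - a) / (Real.log b - Real.log a) - (a + b) / 2|
      = (a + b) / 2 - (b - a) / c := by
    rw [show Real.log b - Real.log a = c by rw [hcdef, hx0, hx1], abs_sub_comm,
      abs_of_nonneg hALnonneg]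
  -- exponential integrals and their bounds
  set Q₁ := ∫ s in (0:ℝ)..(1/2:ℝ), Real.exp (x0 + s * c) ^ q with hQ1def
  set Q₂ := ∫ s in (1/2:ℝ)..1, Real.exp (x0 + s * c) ^ q with hQ2def
  have hexpq : ∀ s : ℝ, Real.exp (x0 + s * c) ^ q = Real.exp (q * (x0 + s * c)) := by
    intro s
    rw [Real.rpow_def_of_pos (Real.exp_pos _), Real.log_exp]
    congr 1; ring
  have hQ10 : 0 ≤ Q₁ := by
    apply intervalIntegral.integral_nonneg (by norm_num)
    intro s _; exact Real.rpow_nonneg (Real.exp_pos _).le q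
  have hQ20 : 0 ≤ Q₂ := by
    apply intervalIntegral.integral_nonneg (by norm_num)
    intro s _; exact Real.rpow_nonneg (Real.exp_pos _).le q
  have hQ1le : Q₁ ≤ (a ^ q + G ^ q) / 4 := by
    rw [hQ1def]
    calc (∫ s in (0:ℝ)..(1/2:ℝ), Real.exp (x0 + s * c) ^ q)
        = ∫ s in (0:ℝ)..(1/2:ℝ), Real.exp (q * (x0 + s * c)) :=
          intervalIntegral.integral_congr (fun s _ => hexpq s)
      _ ≤ (Real.exp (q * x0) + Real.exp (q * (x0 + c / 2))) / 4 := stmt13_exp_bound_left x0 c q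
      _ = (a ^ q + G ^ q) / 4 := by rw [ea, eg]
  have hQ2le : Q₂ ≤ (G ^ q + b ^ q) / 4 := by
    rw [hQ2def]
    calc (∫ s in (1/2:ℝ)..1, Real.exp (x0 + s * c) ^ q)
        = ∫ s in (1/2:ℝ)..1, Real.exp (q * (x0 + s * c)) :=
          intervalIntegral.integral_congr (fun s _ => hexpq s)
      _ ≤ (Real.exp (q * (x0 + c / 2)) + Real.exp (q * (x0 + c))) / 4 :=
          stmt13_exp_bound_right x0 c q
      _ = (G ^ q + b ^ q) / 4 := by rw [eg, eb]
  -- Hölder bounds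
  have hH1 : I₁ ≤ K ^ (1/p) * Q₁ ^ (1/q) := by
    rw [hI1def, hKdef, hQ1def]
    exact stmt13_holder_half p q x0 c hpq' (by norm_num) le_rfl (by norm_num)
  have hH2 : I₂ ≤ K ^ (1/p) * Q₂ ^ (1/q) := by
    have := stmt13_holder_half p q x0 c hpq' (by norm_num : (1/2:ℝ) ≤ 1)
      (by norm_num) le_rfl
    rw [hI2def, hKdef, hQ2def, ← stmt13_kernel_right p]
    exact this
  -- raise the Q bounds to the power 1/q
  have hT1 : Q₁ ^ (1/q) ≤ ((a ^ q + G ^ q) / 4) ^ (1/q) :=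
    Real.rpow_le_rpow hQ10 hQ1le (by positivity)
  have hT2 : Q₂ ^ (1/q) ≤ ((G ^ q + b ^ q) / 4) ^ (1/q) :=
    Real.rpow_le_rpow hQ20 hQ2le (by positivity)
  have hKp0 : 0 ≤ K ^ (1/p) := Real.rpow_nonneg hK0 _
  -- combine
  have hmain : (a + b) / 2 - (b - a) / c
      ≤ c ^ 2 / 2 * (K ^ (1/p) * (((a ^ q + G ^ q) / 4) ^ (1/q)
          + ((G ^ q + b ^ q) / 4) ^ (1/q))) := by
    have h1 : (a + b) / 2 - (b - a) / c = c ^ 2 / 2 * (I₁ + I₂) := by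
      rw [hIval]; field_simp; ring
    rw [h1]
    have h2 : I₁ + I₂ ≤ K ^ (1/p) * (((a ^ q + G ^ q) / 4) ^ (1/q)
        + ((G ^ q + b ^ q) / 4) ^ (1/q)) := by
      calc I₁ + I₂ ≤ K ^ (1/p) * Q₁ ^ (1/q) + K ^ (1/p) * Q₂ ^ (1/q) := add_le_add hH1 hH2
        _ ≤ K ^ (1/p) * ((a ^ q + G ^ q) / 4) ^ (1/q)
            + K ^ (1/p) * ((G ^ q + b ^ q) / 4) ^ (1/q) :=
          add_le_add (mul_le_mul_of_nonneg_left hT1 hKp0)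
            (mul_le_mul_of_nonneg_left hT2 hKp0)
        _ = K ^ (1/p) * (((a ^ q + G ^ q) / 4) ^ (1/q) + ((G ^ q + b ^ q) / 4) ^ (1/q)) := by
          ring
    have : (0:ℝ) ≤ c ^ 2 / 2 := by positivity
    exact mul_le_mul_of_nonneg_left h2 this
  -- now rewrite the right-hand side into the required form
  have haq0 : (0:ℝ) ≤ a ^ q := Real.rpow_nonneg ha.le q
  have hbq0 : (0:ℝ) ≤ b ^ q := Real.rpow_nonneg hb.le q
  have hGq0 : (0:ℝ) ≤ G ^ q := Real.rpow_nonneg hG.le q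
  have hKp : K ^ (1/p) = (1/4:ℝ) ^ ((p + 1) * (1/p)) * B ^ (1/p) := by
    rw [hKval, Real.mul_rpow (Real.rpow_nonneg (by norm_num) _) hB0,
      ← Real.rpow_mul (by norm_num : (0:ℝ) ≤ 1/4)]
  have hdiv1 : ((a ^ q + G ^ q) / 4) ^ (1/q)
      = (a ^ q + G ^ q) ^ (1/q) * (1/4:ℝ) ^ (1/q) := by
    rw [show (a ^ q + G ^ q) / 4 = (a ^ q + G ^ q) * (1/4) by ring,
      Real.mul_rpow (by positivity) (by norm_num)]
  have hdiv2 : ((G ^ q + b ^ q) / 4) ^ (1/q)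
      = (b ^ q + G ^ q) ^ (1/q) * (1/4:ℝ) ^ (1/q) := by
    rw [show (G ^ q + b ^ q) / 4 = (b ^ q + G ^ q) * (1/4) by ring,
      Real.mul_rpow (by positivity) (by norm_num)]
  have hconst : (1/4:ℝ) ^ ((p + 1) * (1/p)) * (1/4:ℝ) ^ (1/q) = 1/16 := by
    rw [← Real.rpow_add (by norm_num : (0:ℝ) < 1/4)]
    have hsum : (p + 1) * (1/p) + 1/q = 2 := by
      have h1 : 1/p + 1/q = 1 := by
        rw [one_div, one_div]; exact hpq'.inv_add_inv_eq_one
      have h2 : (p + 1) * (1/p) = 1 + 1/p := by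
        field_simp
      rw [h2]; linarith
    rw [hsum, show (2:ℝ) = ((2:ℕ):ℝ) by norm_num, Real.rpow_natCast]
    norm_num
  rw [habs]
  calc (a + b) / 2 - (b - a) / c
      ≤ c ^ 2 / 2 * (K ^ (1/p) * (((a ^ q + G ^ q) / 4) ^ (1/q)
          + ((G ^ q + b ^ q) / 4) ^ (1/q))) := hmain
    _ = c ^ 2 / 16 * B ^ (1/p)
        * (((a ^ q + G ^ q) ^ (1/q) + (b ^ q + G ^ q) ^ (1/q)) / 2) := by
        rw [hKp, hdiv1, hdiv2]
        have e : c ^ 2 / 2 * ((1/4:ℝ) ^ ((p + 1) * (1/p)) * B ^ (1/p)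
            * ((a ^ q + G ^ q) ^ (1/q) * (1/4:ℝ) ^ (1/q)
              + (b ^ q + G ^ q) ^ (1/q) * (1/4:ℝ) ^ (1/q)))
          = c ^ 2 / 2 * ((1/4:ℝ) ^ ((p + 1) * (1/p)) * (1/4:ℝ) ^ (1/q)) * B ^ (1/p)
            * ((a ^ q + G ^ q) ^ (1/q) + (b ^ q + G ^ q) ^ (1/q)) := by ring
        rw [e, hconst]
        ring
    _ = (Real.log b - Real.log a) ^ 2 / 16 * B ^ (1/p)
        * (((a ^ q + G ^ q) ^ (1/q) + (b ^ q + G ^ q) ^ (1/q)) / 2) := by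
        rw [show Real.log b - Real.log a = c by rw [hcdef, hx0, hx1]]
end

section
/- Let n ∈ ℕ with n ≥ 2, let 0 < a < b, let q ≥ 1, and let p satisfy 1/p + 1/q = 1. Then |A(aⁿ, bⁿ) − Lₙ(a, b)ⁿ| ≤ ((b−a)²/16) · (2/3)^{1/p} · n(n−1) · (1/12)^{1/q} · [ (3 a^{(n−2)q} + 5 A(a,b)^{(n−2)q})^{1/q} + (3 b^{(n−2)q} + 5 A(a,b)^{(n−2)q})^{1/q} ], where A(x, y) = (x+y)/2 is the arithmetic mean and Lₙ(a, b) = [ (b^{n+1} − a^{n+1}) / ((n+1)(b−a)) ]^{1/n} is the generalized logarithmic mean. (This is obtained by applying the h-convex trapezoid inequality with exponent q to f(x) = xⁿ on [a, b] with h(t) = t.) -/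
open MeasureTheory intervalIntegral

private lemma my_young {q p y : ℝ} (hq : 1 ≤ q) (hpq : 1 / p + 1 / q = 1) (hy : 0 ≤ y) :
    y ≤ y ^ q / q + 1 / p := by
  have hq0 : (0:ℝ) < q := by linarith
  have hb := one_add_mul_self_le_rpow_one_add (s := y - 1) (by linarith) hq
  rw [show (1:ℝ) + (y - 1) = y by ring] at hb
  have hp' : 1 / p = 1 - 1 / q := by linarith
  have h2 : y ^ q / q + (1 - 1/q) - y = (y ^ q + q - 1 - q*y)/q := by
    field_simp; ring
  have h3 : (0:ℝ) ≤ (y ^ q + q - 1 - q*y)/q := div_nonneg (by nlinarith) hq0.le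
  rw [hp']; linarith

private lemma conv_pt {e c d u : ℝ} (he : e = 0 ∨ 1 ≤ e) (hc : 0 ≤ c) (hd : 0 ≤ d)
    (hu : 0 ≤ u) (hu1 : u ≤ 1) :
    (u * c + (1 - u) * d) ^ e ≤ u * c ^ e + (1 - u) * d ^ e := by
  rcases he with h | h
  · simp only [h, Real.rpow_zero]; linarith
  · have h2 := (convexOn_rpow h).2 (Set.mem_Ici.2 hc) (Set.mem_Ici.2 hd) hu
      (by linarith : (0:ℝ) ≤ 1 - u) (by ring)
    simpa [smul_eq_mul] using h2

private lemma master (m : ℕ) {c d q p : ℝ} (hc : 0 < c) (hd : 0 < d) (hq : 1 ≤ q)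
    (hpq : 1 / p + 1 / q = 1) :
    (∫ t in (1/2 : ℝ)..1, t * (1 - t) * ((2*t - 1) * c + (2 - 2*t) * d) ^ m) ≤
      ((1:ℝ)/12) ^ (1/p) * ((3 * c ^ ((m:ℝ)*q) + 5 * d ^ ((m:ℝ)*q)) / 96) ^ (1/q) := by
  have hq0 : (0:ℝ) < q := by linarith
  have hp' : 1 / p = 1 - 1 / q := by linarith
  set α := c ^ ((m:ℝ)*q) with hα
  set β := d ^ ((m:ℝ)*q) with hβ
  have hα0 : 0 < α := Real.rpow_pos_of_pos hc _
  have hβ0 : 0 < β := Real.rpow_pos_of_pos hd _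
  set M := (3 * α + 5 * β) / 96 with hM
  have hM0 : 0 < M := div_pos (by linarith) (by norm_num)
  set θ := (M * 12) ^ (1/q) with hθdef
  have hθ0 : 0 < θ := Real.rpow_pos_of_pos (by linarith) _
  have hθq : θ ^ q = M * 12 := by
    rw [hθdef, ← Real.rpow_mul (by linarith : (0:ℝ) ≤ M*12), one_div_mul_cancel hq0.ne',
      Real.rpow_one]
  set C1 := θ / ((M*12) * q) with hC1
  set C2 := θ * (1 - 1/q) with hC2
  have hq1 : 1/q ≤ 1 := by rw [div_le_one hq0]; exact hq
  have hC20 : 0 ≤ C2 := mul_nonneg hθ0.le (by linarith)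
  -- pointwise bound
  have hpt : ∀ t ∈ Set.Icc (1/2:ℝ) 1,
      t*(1-t)*((2*t-1)*c + (2-2*t)*d)^m ≤ t*(1-t)*(C1*((2*t-1)*α + (2-2*t)*β) + C2) := by
    intro t ht
    obtain ⟨ht1, ht2⟩ := ht
    have hu0 : (0:ℝ) ≤ 2*t-1 := by linarith
    have hu1 : 2*t-1 ≤ 1 := by linarith
    have hz0 : 0 < (2*t-1)*c + (2-2*t)*d := by
      rcases lt_or_ge t 1 with h | h
      · have h1 := mul_pos (show (0:ℝ) < 2-2*t by linarith) hd
        have h2 := mul_nonneg hu0 hc.le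
        linarith
      · have ht' : t = 1 := le_antisymm ht2 h
        rw [ht']; norm_num; linarith
    set z := (2*t-1)*c + (2-2*t)*d with hzdef
    have hzm : (0:ℝ) ≤ z ^ m := pow_nonneg hz0.le m
    have hzq : ((z ^ m : ℝ)) ^ q = z ^ ((m:ℝ)*q) := by
      rw [← Real.rpow_natCast z m, ← Real.rpow_mul hz0.le]
    have hconv : z ^ ((m:ℝ)*q) ≤ (2*t-1)*α + (2-2*t)*β := by
      have he : (m:ℝ)*q = 0 ∨ 1 ≤ (m:ℝ)*q := by
        rcases Nat.eq_zero_or_pos m with h | h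
        · left; simp [h]
        · right
          have h1 : (1:ℝ) ≤ (m:ℝ) := by exact_mod_cast h
          nlinarith
      have hz2 : z = (2*t-1)*c + (1-(2*t-1))*d := by rw [hzdef]; ring
      calc z ^ ((m:ℝ)*q) = ((2*t-1)*c + (1-(2*t-1))*d) ^ ((m:ℝ)*q) := by rw [← hz2]
        _ ≤ (2*t-1)*c^((m:ℝ)*q) + (1-(2*t-1))*d^((m:ℝ)*q) := conv_pt he hc.le hd.le hu0 hu1
        _ = (2*t-1)*α + (2-2*t)*β := by rw [hα, hβ]; ring
    have hy := my_young hq hpq (show (0:ℝ) ≤ z^m/θ from div_nonneg hzm hθ0.le)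
    have key : z ^ m ≤ C1*((2*t-1)*α + (2-2*t)*β) + C2 := by
      have h5 : (z^m/θ)^q = z^((m:ℝ)*q)/(M*12) := by
        rw [Real.div_rpow hzm hθ0.le, hzq, hθq]
      calc z ^ m = θ * (z^m/θ) := by field_simp
        _ ≤ θ * ((z^m/θ)^q/q + 1/p) := mul_le_mul_of_nonneg_left hy hθ0.le
        _ = θ * (z^((m:ℝ)*q)/(M*12)/q) + C2 := by rw [h5, hp', hC2]; ring
        _ ≤ θ * (((2*t-1)*α + (2-2*t)*β)/(M*12)/q) + C2 := by
            have h6 : (0:ℝ) < M*12 := by linarith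
            exact add_le_add_left (mul_le_mul_of_nonneg_left
              ((div_le_div_iff_of_pos_right hq0).mpr ((div_le_div_iff_of_pos_right h6).mpr hconv)) hθ0.le) C2
        _ = C1*((2*t-1)*α + (2-2*t)*β) + C2 := by
            rw [hC1]; field_simp
    have hw : (0:ℝ) ≤ t*(1-t) := by nlinarith
    exact mul_le_mul_of_nonneg_left key hw
  have hcont1 : Continuous fun t : ℝ => t*(1-t)*((2*t-1)*c + (2-2*t)*d)^m := by fun_prop
  have hcont2 : Continuous fun t : ℝ => t*(1-t)*(C1*((2*t-1)*α + (2-2*t)*β) + C2) := by fun_prop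
  have hmono := integral_mono_on (μ := MeasureTheory.volume) (by norm_num : (1/2:ℝ) ≤ 1)
      (hcont1.intervalIntegrable _ _) (hcont2.intervalIntegrable _ _) hpt
  have hval : (∫ t in (1/2:ℝ)..1, t*(1-t)*(C1*((2*t-1)*α + (2-2*t)*β) + C2))
      = C1*M + C2*(1/12) := by
    have hasd : ∀ t ∈ Set.uIcc (1/2:ℝ) 1, HasDerivAt
        (fun t : ℝ => C1*(α*(t^3-t^2/2-t^4/2)+β*(t^2-4*t^3/3+t^4/2))+C2*(t^2/2-t^3/3))
        (t*(1-t)*(C1*((2*t-1)*α + (2-2*t)*β) + C2)) t := by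
      intro t _
      have h2 := hasDerivAt_pow 2 t
      have h3 := hasDerivAt_pow 3 t
      have h4 := hasDerivAt_pow 4 t
      have hP := (HasDerivAt.const_mul C1 ((HasDerivAt.const_mul α
          ((h3.sub (h2.div_const 2)).sub (h4.div_const 2))).add
          (HasDerivAt.const_mul β ((h2.sub ((HasDerivAt.const_mul (4:ℝ) h3).div_const 3)).add
          (h4.div_const 2))))).add
          (HasDerivAt.const_mul C2 ((h2.div_const 2).sub (h3.div_const 3)))
      refine hP.congr_deriv ?_
      norm_num
      ring
    rw [integral_eq_sub_of_hasDerivAt hasd (hcont2.intervalIntegrable _ _)]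
    rw [hM]; norm_num; ring
  have hfin : C1*M + C2*(1/12) = ((1:ℝ)/12)^(1/p) * M^(1/q) := by
    have h7 : C1*M + C2*(1/12) = θ/12 := by
      rw [hC1, hC2]; field_simp; ring
    have h9 : ((1:ℝ)/12)^(1/q) * (12:ℝ)^(1/q) = 1 := by
      rw [← Real.mul_rpow (by norm_num) (by norm_num)]; norm_num
    have hpos : 0 < ((1:ℝ)/12)^(1/q) := Real.rpow_pos_of_pos (by norm_num) _
    have h8 : θ/12 = ((1:ℝ)/12)^(1/p) * M^(1/q) := by
      rw [hθdef, hp', Real.mul_rpow hM0.le (by norm_num : (0:ℝ) ≤ 12),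
        Real.rpow_sub (by norm_num : (0:ℝ) < 1/12), Real.rpow_one]
      field_simp
      linear_combination h9
    rw [h7, h8]
  calc (∫ t in (1/2:ℝ)..1, t*(1-t)*((2*t-1)*c + (2-2*t)*d)^m)
      ≤ ∫ t in (1/2:ℝ)..1, t*(1-t)*(C1*((2*t-1)*α + (2-2*t)*β) + C2) := hmono
    _ = C1*M + C2*(1/12) := hval
    _ = ((1:ℝ)/12)^(1/p) * M^(1/q) := hfin

/-- Proposition 2: an inequality between the arithmetic and generalized logarithmic means. -/
theorem stmt_14 (n : ℕ) (hn : 2 ≤ n) (a b q p : ℝ) (ha : 0 < a) (hab : a < b)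
    (hq : 1 ≤ q) (hpq : 1 / p + 1 / q = 1) :
    |(a ^ n + b ^ n) / 2 -
        (((b ^ (n + 1) - a ^ (n + 1)) / (((n : ℝ) + 1) * (b - a))) ^ ((1:ℝ) / n)) ^ n| ≤
      (b - a) ^ 2 / 16 * ((2:ℝ) / 3) ^ (1 / p) * (n * (n - 1) : ℝ) * ((1:ℝ) / 12) ^ (1 / q) *
        ((3 * a ^ (((n : ℝ) - 2) * q) + 5 * ((a + b) / 2) ^ (((n : ℝ) - 2) * q)) ^ (1 / q) +
         (3 * b ^ (((n : ℝ) - 2) * q) + 5 * ((a + b) / 2) ^ (((n : ℝ) - 2) * q)) ^ (1 / q)) := by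
  obtain ⟨m, rfl⟩ : ∃ m, n = m + 2 := ⟨n - 2, by omega⟩
  have hb0 : 0 < b := lt_trans ha hab
  have hba : 0 < b - a := by linarith
  have hA0 : 0 < (a+b)/2 := by linarith
  set X := (b ^ (m + 2 + 1) - a ^ (m + 2 + 1)) / ((((m + 2 : ℕ) : ℝ) + 1) * (b - a)) with hXdef
  have hX : 0 < X := by
    apply div_pos (sub_pos.2 (pow_lt_pow_left₀ hab ha.le (by omega)))
    exact mul_pos (by positivity) hba
  have hXn : (X ^ ((1:ℝ) / ((m + 2 : ℕ) : ℝ))) ^ (m + 2) = X := by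
    rw [← Real.rpow_natCast (X ^ ((1:ℝ) / ((m + 2 : ℕ) : ℝ))) (m + 2),
      ← Real.rpow_mul hX.le, one_div_mul_cancel (by positivity), Real.rpow_one]
  set φ : ℝ → ℝ := fun t => t*(1-t)*(t*a+(1-t)*b)^m with hφ
  have hφc : Continuous φ := by rw [hφ]; fun_prop
  have hm3 : ((m:ℝ)+3) ≠ 0 := by positivity
  have hFTC : (∫ t in (0:ℝ)..1, ((b-a)^2*(((m:ℝ)+2)*((m:ℝ)+1))) * φ t)
      = a^(m+2) + b^(m+2) - 2*X := by
    have hder : ∀ t ∈ Set.uIcc (0:ℝ) 1, HasDerivAt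
        (fun t : ℝ => (2*t-1)*(t*a+(1-t)*b)^(m+2)
          - t*(1-t)*((b-a)*((m:ℝ)+2)*(t*a+(1-t)*b)^(m+1))
          + (2/(((m:ℝ)+3)*(b-a)))*(t*a+(1-t)*b)^(m+3))
        (((b-a)^2*(((m:ℝ)+2)*((m:ℝ)+1))) * φ t) t := by
      intro t _
      have hx : HasDerivAt (fun t : ℝ => t*a+(1-t)*b) (a-b) t := by
        have h := ((hasDerivAt_id t).mul_const a).add
          (((hasDerivAt_const t (1:ℝ)).sub (hasDerivAt_id t)).mul_const b)
        refine h.congr_deriv ?_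
        ring
      have hl : HasDerivAt (fun t : ℝ => 2*t-1) 2 t := by
        simpa using ((hasDerivAt_id t).const_mul 2).sub_const 1
      have hw : HasDerivAt (fun t : ℝ => t*(1-t)) (1-2*t) t := by
        have h := (hasDerivAt_id t).mul ((hasDerivAt_const t (1:ℝ)).sub (hasDerivAt_id t))
        refine h.congr_deriv ?_
        simp only [id_eq, Pi.sub_apply]
        ring
      have h2 := hx.pow (m+2)
      have h1 := hx.pow (m+1)
      have h3 := hx.pow (m+3)
      have hP := ((hl.mul h2).sub (hw.mul (HasDerivAt.const_mul ((b-a)*((m:ℝ)+2)) h1))).add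
        (HasDerivAt.const_mul (2/(((m:ℝ)+3)*(b-a))) h3)
      refine hP.congr_deriv ?_
      simp only [hφ, Pi.pow_apply, show m+2-1 = m+1 from rfl, show m+1-1 = m from rfl,
        show m+3-1 = m+2 from rfl]
      push_cast
      set y := t*a+(1-t)*b with hy
      field_simp
      ring
    rw [integral_eq_sub_of_hasDerivAt hder ((continuous_const.mul hφc).intervalIntegrable _ _)]
    rw [hXdef]
    push_cast
    norm_num
    field_simp
    ring
  have hI0 : 0 ≤ ∫ t in (0:ℝ)..1, φ t := by
    apply intervalIntegral.integral_nonneg (by norm_num : (0:ℝ) ≤ 1)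
    intro t ht
    obtain ⟨ht0, ht1⟩ := ht
    have hx0 : 0 ≤ t*a+(1-t)*b := by nlinarith
    simp only [hφ]
    exact mul_nonneg (by nlinarith) (pow_nonneg hx0 m)
  have hsplit : (∫ t in (0:ℝ)..1, φ t)
      = (∫ t in (0:ℝ)..(1/2:ℝ), φ t) + ∫ t in (1/2:ℝ)..1, φ t :=
    (integral_add_adjacent_intervals (hφc.intervalIntegrable _ _)
      (hφc.intervalIntegrable _ _)).symm
  have hI2 : (∫ t in (0:ℝ)..(1/2:ℝ), φ t)
      = ∫ u in (1/2:ℝ)..1, u*(1-u)*((2*u-1)*b + (2-2*u)*((a+b)/2))^m := by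
    have h := intervalIntegral.integral_comp_sub_left (a := (1/2:ℝ)) (b := 1) φ 1
    rw [show (1:ℝ)-1 = 0 by norm_num, show (1:ℝ)-1/2 = 1/2 by norm_num] at h
    rw [← h]
    apply intervalIntegral.integral_congr
    intro u _
    simp only [hφ]
    have hbase : (1-u)*a + (1-(1-u))*b = (2*u-1)*b + (2-2*u)*((a+b)/2) := by ring
    rw [hbase]
    ring
  have hI1 : (∫ t in (1/2:ℝ)..1, φ t)
      = ∫ u in (1/2:ℝ)..1, u*(1-u)*((2*u-1)*a + (2-2*u)*((a+b)/2))^m := by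
    apply intervalIntegral.integral_congr
    intro u _
    simp only [hφ]
    have hbase : u*a + (1-u)*b = (2*u-1)*a + (2-2*u)*((a+b)/2) := by ring
    rw [hbase]
  have hB1 := master m ha hA0 hq hpq
  have hB2 := master m hb0 hA0 hq hpq
  have hEeq : (a^(m+2)+b^(m+2))/2 - X
      = ((b-a)^2*(((m:ℝ)+2)*((m:ℝ)+1)))/2 * ∫ t in (0:ℝ)..1, φ t := by
    rw [intervalIntegral.integral_const_mul] at hFTC
    linarith [hFTC]
  rw [hXn, abs_of_nonneg (by rw [hEeq]; exact mul_nonneg (by positivity) hI0), hEeq,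
    hsplit, hI2, hI1]
  have hstep : (∫ u in (1/2:ℝ)..1, u*(1-u)*((2*u-1)*b + (2-2*u)*((a+b)/2))^m)
      + (∫ u in (1/2:ℝ)..1, u*(1-u)*((2*u-1)*a + (2-2*u)*((a+b)/2))^m)
      ≤ ((1:ℝ)/12)^(1/p) * ((3*b^((m:ℝ)*q)+5*((a+b)/2)^((m:ℝ)*q))/96)^(1/q)
        + ((1:ℝ)/12)^(1/p) * ((3*a^((m:ℝ)*q)+5*((a+b)/2)^((m:ℝ)*q))/96)^(1/q) :=
    add_le_add hB2 hB1
  apply le_trans (mul_le_mul_of_nonneg_left hstep (by positivity))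
  apply le_of_eq
  rw [show ((((m+2:ℕ)):ℝ)-2)*q = (m:ℝ)*q by push_cast; ring]
  have hsa : (0:ℝ) ≤ 3*a^((m:ℝ)*q)+5*((a+b)/2)^((m:ℝ)*q) := by positivity
  have hsb : (0:ℝ) ≤ 3*b^((m:ℝ)*q)+5*((a+b)/2)^((m:ℝ)*q) := by positivity
  rw [show (3*a^((m:ℝ)*q)+5*((a+b)/2)^((m:ℝ)*q))/96
      = (3*a^((m:ℝ)*q)+5*((a+b)/2)^((m:ℝ)*q))*(1/96) by ring,
    show (3*b^((m:ℝ)*q)+5*((a+b)/2)^((m:ℝ)*q))/96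
      = (3*b^((m:ℝ)*q)+5*((a+b)/2)^((m:ℝ)*q))*(1/96) by ring,
    Real.mul_rpow hsa (by norm_num), Real.mul_rpow hsb (by norm_num)]
  have h1 : ((1:ℝ)/12)^(1/p) = ((2:ℝ)/3)^(1/p)*((1:ℝ)/8)^(1/p) := by
    rw [← Real.mul_rpow (by norm_num) (by norm_num)]; norm_num
  have h2q : ((1:ℝ)/96)^(1/q) = ((1:ℝ)/12)^(1/q)*((1:ℝ)/8)^(1/q) := by
    rw [← Real.mul_rpow (by norm_num) (by norm_num)]; norm_num
  have h3pq : ((1:ℝ)/8)^(1/p)*((1:ℝ)/8)^(1/q) = 1/8 := by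
    rw [← Real.rpow_add (by norm_num), hpq, Real.rpow_one]
  push_cast
  rw [h1, h2q]
  linear_combination ((b-a)^2*(((m:ℝ)+2)*((m:ℝ)+1))*((2:ℝ)/3)^(1/p)*((1:ℝ)/12)^(1/q)
    *((3*a^((m:ℝ)*q)+5*((a+b)/2)^((m:ℝ)*q))^(1/q)
      +(3*b^((m:ℝ)*q)+5*((a+b)/2)^((m:ℝ)*q))^(1/q))/2) * h3pq
end

section
/- Let 0 < a < b and let q > 1 with p = q/(q−1). Then |1/L(a, b) − 1/A(a, b)| ≤ ((b−a)²/4) · (1/(2p+1))^{1/p} · H(a^{3q}, b^{3q})^{−1/q}, where A(x, y) = (x+y)/2 is the arithmetic mean, H(x, y) = 2xy/(x+y) is the harmonic mean, and L(a, b) = (b−a)/(ln b − ln a) is the logarithmic mean. (This is obtained by applying the h-convex midpoint inequality with exponent q to f(x) = 1/x on [a, b] with h(t) = t.) -/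
open MeasureTheory intervalIntegral

open Set
-- derivative helper for upper bound function
lemma derivA (x : ℝ) (hx : 0 < x) :
    HasDerivAt (fun t : ℝ => (t^3+9*t^2-9*t-1)/(6*t^2+6*t) - Real.log t)
      ((x-1)^4/(6*x^2*(x+1)^2)) x := by
  have hden : 6*x^2+6*x ≠ 0 := by positivity
  have hnum : HasDerivAt (fun t : ℝ => t^3+9*t^2-9*t-1) (3*x^2+9*(2*x)-9) x := by
    have h3 : HasDerivAt (fun t : ℝ => t^3) (3*x^2) x := by
      simpa using hasDerivAt_pow 3 x
    have h2 : HasDerivAt (fun t : ℝ => 9*t^2) (9*(2*x)) x := by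
      simpa using (hasDerivAt_pow 2 x).const_mul 9
    have h1 : HasDerivAt (fun t : ℝ => 9*t) (9:ℝ) x := by
      simpa using (hasDerivAt_id x).const_mul 9
    simpa using ((h3.add h2).sub h1).sub_const 1
  have hdenD : HasDerivAt (fun t : ℝ => 6*t^2+6*t) (6*(2*x)+6) x := by
    have h2 : HasDerivAt (fun t : ℝ => 6*t^2) (6*(2*x)) x := by
      simpa using (hasDerivAt_pow 2 x).const_mul 6
    have h1 : HasDerivAt (fun t : ℝ => 6*t) (6:ℝ) x := by
      simpa using (hasDerivAt_id x).const_mul 6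
    exact h2.add h1
  have hdiv := hnum.div hdenD hden
  have hlog := Real.hasDerivAt_log (ne_of_gt hx)
  have := hdiv.sub hlog
  refine this.congr_deriv ?_
  field_simp
  ring

lemma derivB (x : ℝ) (hx : 0 < x) :
    HasDerivAt (fun t : ℝ => Real.log t - 2*(t-1)/(t+1))
      ((x-1)^2/(x*(x+1)^2)) x := by
  have hden : x + 1 ≠ 0 := by positivity
  have hnum : HasDerivAt (fun t : ℝ => 2*(t-1)) (2:ℝ) x := by
    simpa using ((hasDerivAt_id x).sub_const 1).const_mul 2
  have hdenD : HasDerivAt (fun t : ℝ => t+1) (1:ℝ) x := by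
    simpa using (hasDerivAt_id x).add_const 1
  have hdiv := hnum.div hdenD hden
  have := (Real.hasDerivAt_log (ne_of_gt hx)).sub hdiv
  refine this.congr_deriv ?_
  field_simp
  ring

lemma log_ub {t : ℝ} (ht : 1 ≤ t) :
    Real.log t ≤ (t^3+9*t^2-9*t-1)/(6*t^2+6*t) := by
  set f : ℝ → ℝ := fun t => (t^3+9*t^2-9*t-1)/(6*t^2+6*t) - Real.log t with hf
  have key : ∀ x ∈ Ici (1:ℝ), 0 < x := fun x hx => lt_of_lt_of_le one_pos hx
  have hmono : MonotoneOn f (Ici 1) := by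
    apply monotoneOn_of_deriv_nonneg (convex_Ici 1)
    · intro x hx
      exact (derivA x (key x hx)).continuousAt.continuousWithinAt
    · intro x hx
      rw [interior_Ici] at hx
      exact (derivA x (lt_trans one_pos hx)).differentiableAt.differentiableWithinAt
    · intro x hx
      rw [interior_Ici] at hx
      rw [(derivA x (lt_trans one_pos hx)).deriv]
      positivity
  have h0 : f 1 = 0 := by norm_num [hf]
  have := hmono (self_mem_Ici) (mem_Ici.mpr ht) ht
  rw [h0] at this
  simp only [hf] at this
  linarith [this]

lemma log_lb {t : ℝ} (ht : 1 ≤ t) :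
    2*(t-1)/(t+1) ≤ Real.log t := by
  set f : ℝ → ℝ := fun t => Real.log t - 2*(t-1)/(t+1) with hf
  have hmono : MonotoneOn f (Ici 1) := by
    apply monotoneOn_of_deriv_nonneg (convex_Ici 1)
    · intro x hx
      exact (derivB x (lt_of_lt_of_le one_pos hx)).continuousAt.continuousWithinAt
    · intro x hx
      rw [interior_Ici] at hx
      exact (derivB x (lt_trans one_pos hx)).differentiableAt.differentiableWithinAt
    · intro x hx
      rw [interior_Ici] at hx
      rw [(derivB x (lt_trans one_pos hx)).deriv]
      have hx0 : (0:ℝ) < x := lt_trans one_pos hx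
      exact div_nonneg (sq_nonneg _) (by positivity)
  have h0 : f 1 = 0 := by norm_num [hf]
  have := hmono (self_mem_Ici) (mem_Ici.mpr ht) ht
  rw [h0] at this
  simp only [hf] at this
  linarith [this]

-- (1/(2p+1))^(1/p) ≥ 1/3 for p > 1
lemma constC {p : ℝ} (hp : 1 < p) : (1:ℝ)/3 ≤ (1/(2*p+1)) ^ (1/p) := by
  have hp0 : 0 < p := lt_trans one_pos hp
  have hB : 1 + p * 2 ≤ (1 + 2 : ℝ) ^ p := one_add_mul_self_le_rpow_one_add (by norm_num) hp.le
  have h1 : (2*p+1 : ℝ) ≤ (3:ℝ) ^ p := by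
    norm_num at hB; linarith
  have hpos : (0:ℝ) < 2*p+1 := by linarith
  have h2 : (2*p+1 : ℝ) ^ (1/p) ≤ ((3:ℝ)^p) ^ (1/p) :=
    Real.rpow_le_rpow hpos.le h1 (by positivity)
  have h3 : ((3:ℝ)^p) ^ (1/p) = 3 := by
    rw [← Real.rpow_mul (by norm_num), mul_one_div, div_self (ne_of_gt hp0), Real.rpow_one]
  rw [h3] at h2
  have h4 : (1/(2*p+1) : ℝ) ^ (1/p) = ((2*p+1 : ℝ) ^ (1/p))⁻¹ := by
    rw [one_div, Real.inv_rpow hpos.le]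
  rw [h4, show (1:ℝ)/3 = (3:ℝ)⁻¹ by norm_num]
  exact inv_anti₀ (by positivity) h2

-- power mean: for u v ≥ 0, q ≥ 1: (u+v)/2 ≤ ((u^q+v^q)/2)^(1/q)
lemma powerMean {u v q : ℝ} (hu : 0 ≤ u) (hv : 0 ≤ v) (hq : 1 < q) :
    (u+v)/2 ≤ ((u^q+v^q)/2) ^ (1/q) := by
  have hq0 : 0 < q := lt_trans one_pos hq
  have hcvx := convexOn_rpow hq.le
  have h := hcvx.2 (Set.mem_Ici.mpr hu) (Set.mem_Ici.mpr hv)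
      (by norm_num : (0:ℝ) ≤ 1/2) (by norm_num : (0:ℝ) ≤ 1/2) (by norm_num)
  simp only [smul_eq_mul] at h
  have h1 : ((u+v)/2) ^ q ≤ (u^q+v^q)/2 := by
    calc ((u+v)/2) ^ q = (1/2*u + 1/2*v) ^ q := by ring_nf
    _ ≤ 1/2*u^q + 1/2*v^q := h
    _ = (u^q+v^q)/2 := by ring
  have h2 : (((u+v)/2) ^ q) ^ (1/q) ≤ ((u^q+v^q)/2) ^ (1/q) :=
    Real.rpow_le_rpow (by positivity) h1 (by positivity)
  rwa [← Real.rpow_mul (by positivity), mul_one_div, div_self (ne_of_gt hq0),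
    Real.rpow_one] at h2

lemma harm {a b q : ℝ} (ha : 0 < a) (hb : 0 < b) (hq : 1 < q) :
    (1/a^3 + 1/b^3)/2 ≤
      (2 * a ^ (3*q) * b ^ (3*q) / (a ^ (3*q) + b ^ (3*q))) ^ (-(1/q)) := by
  have hx : (0:ℝ) < a^3 := pow_pos ha 3
  have hy : (0:ℝ) < b^3 := pow_pos hb 3
  have hax : a ^ (3*q) = (a^3 : ℝ) ^ q := by
    rw [Real.rpow_mul ha.le, show ((3:ℝ)) = ((3:ℕ):ℝ) by norm_num, Real.rpow_natCast]
  have hbx : b ^ (3*q) = (b^3 : ℝ) ^ q := by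
    rw [Real.rpow_mul hb.le, show ((3:ℝ)) = ((3:ℕ):ℝ) by norm_num, Real.rpow_natCast]
  rw [hax, hbx]
  have hxq : (0:ℝ) < (a^3:ℝ)^q := Real.rpow_pos_of_pos hx q
  have hyq : (0:ℝ) < (b^3:ℝ)^q := Real.rpow_pos_of_pos hy q
  have hbasepos : (0:ℝ) < 2 * (a^3:ℝ)^q * (b^3:ℝ)^q / ((a^3:ℝ)^q + (b^3:ℝ)^q) := by
    positivity
  have e1 : (2 * (a^3:ℝ)^q * (b^3:ℝ)^q / ((a^3:ℝ)^q + (b^3:ℝ)^q)) ^ (-(1/q))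
      = ((2 * (a^3:ℝ)^q * (b^3:ℝ)^q / ((a^3:ℝ)^q + (b^3:ℝ)^q))⁻¹) ^ (1/q) := by
    rw [Real.rpow_neg hbasepos.le, ← Real.inv_rpow hbasepos.le]
  have hu : (1/a^3 : ℝ)^q = ((a^3:ℝ)^q)⁻¹ := by
    rw [one_div, Real.inv_rpow hx.le]
  have hv : (1/b^3 : ℝ)^q = ((b^3:ℝ)^q)⁻¹ := by
    rw [one_div, Real.inv_rpow hy.le]
  have e2 : (2 * (a^3:ℝ)^q * (b^3:ℝ)^q / ((a^3:ℝ)^q + (b^3:ℝ)^q))⁻¹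
      = ((1/a^3:ℝ)^q + (1/b^3:ℝ)^q)/2 := by
    rw [hu, hv]
    field_simp
    ring
  rw [e1, e2]
  exact powerMean (by positivity) (by positivity) hq

/-- Proposition 3: an inequality between the reciprocals of the logarithmic and
arithmetic means, involving the harmonic mean. -/
theorem stmt_15 (a b q p : ℝ) (ha : 0 < a) (hab : a < b)
    (hq : 1 < q) (hp : p = q / (q - 1)) :
    |1 / ((b - a) / (Real.log b - Real.log a)) - 1 / ((a + b) / 2)| ≤
      (b - a) ^ 2 / 4 * (1 / (2 * p + 1)) ^ (1 / p) *
        (2 * a ^ (3 * q) * b ^ (3 * q) / (a ^ (3 * q) + b ^ (3 * q))) ^ (-(1 / q)) := by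
  have hb : 0 < b := ha.trans hab
  have hba : 0 < b - a := sub_pos.mpr hab
  have habp : 0 < a + b := by linarith
  have ht1 : 1 < b / a := (one_lt_div ha).mpr hab
  have hlogba : Real.log b - Real.log a = Real.log (b/a) := (Real.log_div hb.ne' ha.ne').symm
  set Lg := Real.log b - Real.log a with hLg
  -- lower bound: X ≥ 0
  have hlb : 2*(b-a)/(a+b) ≤ Lg := by
    have h := log_lb ht1.le
    rw [← hlogba] at h
    have e : 2*(b/a-1)/(b/a+1) = 2*(b-a)/(a+b) := by
      rw [div_eq_div_iff (by positivity) habp.ne']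
      field_simp
      ring
    linarith [e ▸ h]
  have hX0 : 0 ≤ Lg/(b-a) - 2/(a+b) := by
    have h1 : 2/(a+b) ≤ Lg/(b-a) := by
      rw [div_le_div_iff₀ habp hba]
      have := (div_le_iff₀ habp).mp hlb
      nlinarith
    linarith
  -- upper bound on Lg
  have hub : Lg ≤ (b-a)*(b^2+10*a*b+a^2)/(6*a*b*(a+b)) := by
    have h := log_ub ht1.le
    rw [← hlogba] at h
    have e : ((b/a)^3+9*(b/a)^2-9*(b/a)-1)/(6*(b/a)^2+6*(b/a))
        = (b-a)*(b^2+10*a*b+a^2)/(6*a*b*(a+b)) := by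
      rw [div_eq_div_iff (by positivity) (by positivity)]
      field_simp
      ring
    linarith [e ▸ h]
  have hXub : Lg/(b-a) - 2/(a+b) ≤ (b-a)^2*(1/a^3+1/b^3)/24 := by
    have h1 : Lg/(b-a) ≤ (b^2+10*a*b+a^2)/(6*a*b*(a+b)) := by
      rw [div_le_iff₀ hba]
      calc Lg ≤ (b-a)*(b^2+10*a*b+a^2)/(6*a*b*(a+b)) := hub
      _ = (b^2+10*a*b+a^2)/(6*a*b*(a+b)) * (b-a) := by ring
    have e2 : (b^2+10*a*b+a^2)/(6*a*b*(a+b)) - 2/(a+b) = (b-a)^2/(6*a*b*(a+b)) := by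
      field_simp
      ring
    have h4 : 4*a^2*b^2 ≤ (a+b)*(a^3+b^3) := by
      nlinarith [mul_nonneg (sq_nonneg (a-b)) (mul_pos ha hb).le,
        mul_nonneg (sq_nonneg (a-b)) (sq_nonneg (a+b))]
    have e3 : (b-a)^2*(1/a^3+1/b^3)/24 = (b-a)^2*(a^3+b^3)/(24*a^3*b^3) := by
      field_simp
      ring
    have h5 : (b-a)^2/(6*a*b*(a+b)) ≤ (b-a)^2*(a^3+b^3)/(24*a^3*b^3) := by
      rw [div_le_div_iff₀ (by positivity) (by positivity)]
      nlinarith [mul_nonneg (mul_nonneg (mul_pos ha hb).le (sq_nonneg (b-a)))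
        (sub_nonneg.mpr h4)]
    rw [e3]
    linarith
  -- right-hand side bounds
  have hp1 : 1 < p := by
    rw [hp, lt_div_iff₀ (by linarith : (0:ℝ) < q - 1)]
    linarith
  have hC := constC hp1
  have hM := harm ha hb hq
  have hMpos : (0:ℝ) ≤ (1/a^3 + 1/b^3)/2 := by
    have := pow_pos ha 3
    have := pow_pos hb 3
    positivity
  have hfin : (b-a)^2*(1/a^3+1/b^3)/24 ≤
      (b - a) ^ 2 / 4 * (1 / (2 * p + 1)) ^ (1 / p) *
        (2 * a ^ (3 * q) * b ^ (3 * q) / (a ^ (3 * q) + b ^ (3 * q))) ^ (-(1 / q)) := by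
    have hCM : (1/3 : ℝ) * ((1/a^3 + 1/b^3)/2) ≤
        (1 / (2 * p + 1)) ^ (1 / p) *
          (2 * a ^ (3 * q) * b ^ (3 * q) / (a ^ (3 * q) + b ^ (3 * q))) ^ (-(1 / q)) :=
      mul_le_mul hC hM hMpos (le_trans (by norm_num) hC)
    calc (b-a)^2*(1/a^3+1/b^3)/24
        = (b-a)^2/4 * ((1/3 : ℝ) * ((1/a^3 + 1/b^3)/2)) := by ring
      _ ≤ (b-a)^2/4 * ((1 / (2 * p + 1)) ^ (1 / p) *
            (2 * a ^ (3 * q) * b ^ (3 * q) / (a ^ (3 * q) + b ^ (3 * q))) ^ (-(1 / q))) :=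
          mul_le_mul_of_nonneg_left hCM (by positivity)
      _ = _ := by ring
  -- assemble
  rw [one_div_div, one_div_div]
  rw [abs_of_nonneg hX0]
  linarith
end
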